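/- arXiv:2004.07167 — 9 statements merged into one kernel-verified Lean document; each statement's English description precedes it below -/
import Mathlib

section
/- Let G be a finite group acting faithfully and transitively on a finite set Ω such that every normal 2-subgroup of G is trivial (i.e. O_2(G) = 1) and such that the stabiliser G_ω of a point ω ∈ Ω is a 2-group. Then the minimal degree of G on Ω is at least 2|Ω|/3; that is, for every g ∈ G with g ≠ 1, one has 3·|supp_Ω(g)| ≥ 2·|Ω|. -/
/-!
A nontrivial `g` fixing a point lies in a point stabiliser, a `2`-group, so a suitable power `t`
of `g` is an involution with at least as many fixed points. As `O₂(G) = 1`, the Baer–Suzuki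
theorem yields a conjugate `s` of `t` such that `t * s` is not a `2`-element; the odd part `w` of
`t * s` is inverted by `t`, and `⟨w⟩` acts semiregularly because point stabilisers are `2`-groups.
Every `⟨w⟩`-orbit has length `|w| ≥ 3` and contains at most one fixed point of `t`, hence
`3 * |Fix(t)| ≤ |Ω|`.
-/

open Subgroup MulAction

section Elementary

variable {G : Type*} [Group G]

theorem Subgroup.card_lt_card_of_lt [Finite G] {H K : Subgroup G} (h : H < K) :
    Nat.card H < Nat.card K :=
  (card_le_of_le h.le).lt_of_ne fun e => h.ne (eq_of_le_of_card_ge h.le e.ge)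

theorem le_normalizer_inter {H : Subgroup G} {S T : Set G} (hS : H ≤ normalizer S)
    (hT : H ≤ normalizer T) : H ≤ normalizer (S ∩ T) :=
  le_set_normalizer_iff.mpr fun h hh _ hg =>
    ⟨le_set_normalizer_iff.mp hS h hh _ hg.1, le_set_normalizer_iff.mp hT h hh _ hg.2⟩

theorem normalizer_conjugatesOf_eq_top (t : G) : normalizer (conjugatesOf t) = ⊤ :=
  top_le_iff.mp <| le_set_normalizer_iff.mpr fun g _ _ hx => hx.trans (isConj_iff.mpr ⟨g, rfl⟩)

theorem isPGroup_zpowers_of_pow_eq_one {p k : ℕ} {g : G} (hg : g ^ p ^ k = 1) :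
    IsPGroup p (zpowers g) :=
  .of_card_dvd_pow (by rw [Nat.card_zpowers]; exact orderOf_dvd_of_pow_eq_one hg)

theorem conj_mul_eq_inv_of_mul_self {t s : G} (ht : t * t = 1) (hs : s * s = 1) :
    t * (t * s) * t⁻¹ = (t * s)⁻¹ := by
  rw [mul_inv_rev, inv_eq_of_mul_eq_one_left hs, inv_eq_of_mul_eq_one_left ht, ← mul_assoc, ht,
    one_mul]

theorem isPGroup_two_closure_pair {t s : G} (ht : t * t = 1) (hs : s * s = 1) {k : ℕ}
    (hk : (t * s) ^ 2 ^ k = 1) : IsPGroup 2 (closure {t, s}) := by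
  have hnorm : zpowers t ≤ normalizer (zpowers (t * s) : Set G) := by
    rw [zpowers_le, mem_normalizer_iff_map_conj_eq, MonoidHom.map_zpowers]
    exact (congrArg zpowers (conj_mul_eq_inv_of_mul_self ht hs)).trans zpowers_inv
  have hsup := (isPGroup_zpowers_of_pow_eq_one hk).to_sup_of_normal_left'
    (isPGroup_zpowers_of_pow_eq_one (k := 1) (by rwa [pow_one, sq])) hnorm
  refine hsup.to_le (closure_le _ |>.mpr ?_)
  rintro x (rfl | rfl)
  · exact mem_sup_right (mem_zpowers x)
  · simpa [← mul_assoc, ht] using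
      mul_mem (mem_sup_right (mem_zpowers t)) (mem_sup_left (mem_zpowers (t * x)))

theorem odd_orderOf_pow_two_pow_factorization {u : G} (hu : orderOf u ≠ 0) :
    Odd (orderOf (u ^ 2 ^ (orderOf u).factorization 2)) := by
  rw [orderOf_pow_of_dvd (pow_ne_zero _ two_ne_zero) (Nat.ordProj_dvd _ 2), Nat.odd_iff,
    ← Nat.two_dvd_ne_zero]
  exact Nat.not_dvd_ordCompl Nat.prime_two hu

theorem eq_one_of_mul_self_eq_one_of_odd_card {W : Subgroup G} (hodd : Odd (Nat.card W)) {u : G}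
    (hu : u ∈ W) (huu : u * u = 1) : u = 1 := by
  have h2 : orderOf (⟨u, hu⟩ : W) ∣ 2 := orderOf_dvd_of_pow_eq_one (Subtype.ext (by simpa [sq]))
  have h1 := ((Nat.coprime_two_left.mpr hodd).coprime_dvd_left h2).eq_one_of_dvd
    (orderOf_dvd_natCard _)
  simpa using orderOf_eq_one_iff.mp h1

end Elementary

section PGroup

variable {G : Type*} [Group G] {p : ℕ} [Fact p.Prime] [Finite G]

theorem IsPGroup.exists_le_lt_le_normalizer {R D : Subgroup G} (hR : IsPGroup p R) (hDR : D < R) :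
    ∃ M : Subgroup G, D ≤ M ∧ M < R ∧ R ≤ normalizer (M : Set G) := by
  have := hR.isNilpotent
  obtain hD | ⟨M, hM, hDM⟩ := eq_top_or_exists_le_coatom (D.subgroupOf R)
  · exact absurd (subgroupOf_eq_top.mp hD) hDR.not_ge
  have := Group.normalizerCondition_of_isNilpotent.normal_of_coatom M hM
  have hR_eq : (⊤ : Subgroup R).map R.subtype = R := by rw [← MonoidHom.range_eq_map, range_subtype]
  refine ⟨M.map R.subtype, ?_, ?_, ?_⟩
  · calc D = (D.subgroupOf R).map R.subtype := by rw [subgroupOf_map_subtype, inf_of_le_left hDR.le]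
      _ ≤ M.map R.subtype := map_mono hDM
  · calc M.map R.subtype < (⊤ : Subgroup R).map R.subtype :=
          (map_lt_map_iff_of_injective R.subtype_injective).mpr hM.lt_top
      _ = R := hR_eq
  · calc R = (normalizer (M : Set R)).map R.subtype := by rw [normalizer_eq_top, hR_eq]
      _ ≤ _ := le_normalizer_map R.subtype

theorem IsPGroup.exists_mem_normalizer_of_lt_closure {Y : Set G} (hp : IsPGroup p (closure Y))
    (hY : closure Y ≤ normalizer Y) {D : Subgroup G} (hD : closure (Y ∩ D) = D)
    (hDY : D < closure Y) : ∃ y ∈ Y, y ∉ D ∧ y ∈ normalizer (D : Set G) := by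
  induction h : Nat.card (closure Y) using Nat.strong_induction_on generalizing Y with
  | _ n ih =>
  obtain ⟨M, hDM, hMY, hYM⟩ := hp.exists_le_lt_le_normalizer hDY
  have hD_le : D ≤ closure (Y ∩ M) := hD ▸ closure_mono (Set.inter_subset_inter_right _ hDM)
  have hYM' : closure Y ≤ normalizer (Y ∩ M) := le_normalizer_inter hY hYM
  by_cases hYMD : Y ∩ M ⊆ D
  · -- `D = closure (Y ∩ M)` is normalized by `closure Y`, so any `y ∈ Y \ M` works
    obtain ⟨y, hyY, hyM⟩ : ∃ y ∈ Y, y ∉ M :=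
      Set.not_subset.mp fun hsub => hMY.not_ge (closure_le M |>.mpr hsub)
    have hD_eq : closure (Y ∩ M) = D := le_antisymm (closure_le D |>.mpr hYMD) hD_le
    exact ⟨y, hyY, fun hyD => hyM (hDM hyD),
      hD_eq ▸ normalizer_le_normalizer_closure _ (hYM' (subset_closure hyY))⟩
  · obtain ⟨w, hwYM, hwD⟩ := Set.not_subset.mp hYMD
    have hlt : closure (Y ∩ M) < closure Y :=
      lt_of_le_of_lt (closure_le M |>.mpr Set.inter_subset_right) hMY
    have hD' : closure (Y ∩ M ∩ D) = D := by rwa [Set.inter_assoc, Set.inter_eq_right.mpr hDM]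
    obtain ⟨y, hy, hyD, hyN⟩ := ih _ (h ▸ card_lt_card_of_lt hlt) (hp.to_le hlt.le)
      (hlt.le.trans hYM') hD' (lt_of_le_of_ne hD_le fun e => hwD (e ▸ subset_closure hwYM)) rfl
    exact ⟨y, hy.1, hyD, hyN⟩

end PGroup

section BaerSuzuki

variable {G : Type*} [Group G] {p : ℕ} {X : Set G}

def IsProperGeneratedBy (X : Set G) (R : Subgroup G) : Prop :=
  R ≠ ⊤ ∧ closure (X ∩ R) = R

theorem isProperGeneratedBy_of_isPGroup (hG : ¬IsPGroup p G) {H : Subgroup G}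
    (hH : IsPGroup p H) (hle : H ≤ closure (X ∩ H)) : IsProperGeneratedBy X H :=
  ⟨fun h => hG (.of_equiv (h ▸ hH) topEquiv),
    le_antisymm (closure_le H |>.mpr Set.inter_subset_right) hle⟩

theorem exists_mem_normalizer_of_isProperGeneratedBy [Fact p.Prime] [Finite G]
    (hX : normalizer X = ⊤) (hsub : ∀ H : Subgroup G, H ≠ ⊤ → IsPGroup p (closure (X ∩ H)))
    {R D : Subgroup G} (hR : IsProperGeneratedBy X R) (hD : closure (X ∩ D) = D) (hDR : D < R) :
    ∃ x ∈ X ∩ R, x ∉ D ∧ x ∈ normalizer (D : Set G) := by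
  refine (hsub R hR.1).exists_mem_normalizer_of_lt_closure ?_ ?_ (by rwa [hR.2])
  · rw [hR.2]
    exact le_normalizer_inter (hX ▸ le_top) le_normalizer
  · rwa [Set.inter_assoc, Set.inter_eq_right.mpr hDR.le]

theorem isPGroup_closure_pair_sup (hsub : ∀ H : Subgroup G, H ≠ ⊤ → IsPGroup p (closure (X ∩ H)))
    (hpair : ∀ x ∈ X, ∀ y ∈ X, IsPGroup p (closure {x, y})) {D : Subgroup G}
    (hD : IsProperGeneratedBy X D) {x y : G} (hx : x ∈ X ∩ normalizer (D : Set G))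
    (hy : y ∈ X ∩ normalizer (D : Set G)) : IsPGroup p ↥(closure {x, y} ⊔ D) := by
  by_cases hN : normalizer (D : Set G) = ⊤
  · exact (hpair x hx.1 y hy.1).to_sup_of_normal_right' (hD.2 ▸ hsub D hD.1) (hN ▸ le_top)
  · refine (hsub _ hN).to_le (sup_le (closure_le _ |>.mpr ?_) ?_)
    · rintro z (rfl | rfl)
      exacts [subset_closure hx, subset_closure hy]
    · calc D = closure (X ∩ D) := hD.2.symm
        _ ≤ _ := closure_mono (Set.inter_subset_inter_right _ le_normalizer)

theorem exists_maximal_isProperGeneratedBy_ne [Finite G] (hG : ¬IsPGroup p G)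
    (hpair : ∀ x ∈ X, ∀ y ∈ X, IsPGroup p (closure {x, y})) (hgen : closure X = ⊤) :
    ∃ R₁ R₂ : Subgroup G, Maximal (IsProperGeneratedBy X) R₁ ∧
      Maximal (IsProperGeneratedBy X) R₂ ∧ R₁ ≠ R₂ := by
  obtain ⟨R₁, -, h₁⟩ := Finite.exists_le_maximal (isProperGeneratedBy_of_isPGroup hG .of_bot bot_le)
  obtain ⟨y, hyX, hyR₁⟩ := Set.not_subset.mp fun h =>
    h₁.prop.1 (top_le_iff.mp (hgen ▸ closure_le _ |>.mpr h))
  obtain ⟨R₂, hyR₂, h₂⟩ := Finite.exists_le_maximal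
    (isProperGeneratedBy_of_isPGroup (H := zpowers y) hG
      (by rw [zpowers_eq_closure, ← Set.pair_eq_singleton]; exact hpair y hyX y hyX)
      (zpowers_le.mpr (subset_closure ⟨hyX, mem_zpowers y⟩)))
  exact ⟨R₁, R₂, h₁, h₂, fun e => hyR₁ (e ▸ zpowers_le.mp hyR₂)⟩

/- Among pairs of distinct maximal subgroups `R₁`, `R₂` satisfying `IsProperGeneratedBy X`, take
one whose common part `D` is largest. Elements `x₁ ∈ R₁`, `x₂ ∈ R₂` of `X` outside `D` that
normalize `D` generate together with `D` a `p`-subgroup `E`; a maximal `R₃ ≥ E` meets each `Rᵢ`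
in more than `D`, so `R₁ = R₃ = R₂`. -/
theorem isPGroup_of_closure_eq_top [Fact p.Prime] [Finite G] (hX : normalizer X = ⊤)
    (hpair : ∀ x ∈ X, ∀ y ∈ X, IsPGroup p (closure {x, y})) (hgen : closure X = ⊤)
    (hsub : ∀ H : Subgroup G, H ≠ ⊤ → IsPGroup p (closure (X ∩ H))) : IsPGroup p G := by
  by_contra hG
  obtain ⟨A, B, hA, hB, hAB⟩ := exists_maximal_isProperGeneratedBy_ne hG hpair hgen
  obtain ⟨⟨R₁, R₂⟩, ⟨h₁, h₂, hne⟩, hmax⟩ := Set.Finite.exists_maximalFor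
    (fun q : Subgroup G × Subgroup G => closure (X ∩ q.1 ∩ q.2))
    {q | Maximal (IsProperGeneratedBy X) q.1 ∧ Maximal (IsProperGeneratedBy X) q.2 ∧ q.1 ≠ q.2}
    (Set.toFinite _) ⟨(A, B), hA, hB, hAB⟩
  set D := closure (X ∩ R₁ ∩ R₂)
  have hD₁ : D ≤ R₁ := closure_le _ |>.mpr fun z hz => hz.1.2
  have hD₂ : D ≤ R₂ := closure_le _ |>.mpr fun z hz => hz.2
  have hD : IsProperGeneratedBy X D :=
    ⟨ne_top_of_le_ne_top h₁.prop.1 hD₁, le_antisymm (closure_le _ |>.mpr Set.inter_subset_right)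
      (closure_mono fun z hz => ⟨hz.1.1, subset_closure hz⟩)⟩
  obtain ⟨x₁, hx₁, hx₁D, hx₁N⟩ := exists_mem_normalizer_of_isProperGeneratedBy hX hsub h₁.prop
    hD.2 (lt_of_le_of_ne hD₁ fun e => hne (h₁.eq_of_le h₂.prop (e ▸ hD₂)))
  obtain ⟨x₂, hx₂, hx₂D, hx₂N⟩ := exists_mem_normalizer_of_isProperGeneratedBy hX hsub h₂.prop
    hD.2 (lt_of_le_of_ne hD₂ fun e => hne (h₂.eq_of_le h₁.prop (e ▸ hD₁)).symm)
  set E := closure {x₁, x₂} ⊔ D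
  have hxE : ({x₁, x₂} : Set G) ⊆ X ∩ E := by
    rintro z (rfl | rfl)
    exacts [⟨hx₁.1, mem_sup_left (subset_closure (Set.mem_insert _ _))⟩,
      ⟨hx₂.1, mem_sup_left (subset_closure (Set.mem_insert_of_mem _ rfl))⟩]
  have hE : IsProperGeneratedBy X E := isProperGeneratedBy_of_isPGroup hG
    (isPGroup_closure_pair_sup hsub hpair hD ⟨hx₁.1, hx₁N⟩ ⟨hx₂.1, hx₂N⟩)
    (sup_le (closure_le _ |>.mpr fun z hz => subset_closure (hxE hz))
      (hD.2 ▸ closure_mono (Set.inter_subset_inter_right _ (le_sup_right : D ≤ E))))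
  obtain ⟨R₃, hER₃, h₃⟩ := Finite.exists_le_maximal hE
  have hR₃ {R : Subgroup G} (hR : Maximal (IsProperGeneratedBy X) R) (hDR : D ≤ R) {x : G}
      (hx : x ∈ X ∩ R) (hxD : x ∉ D) (hxE : x ∈ E) : R = R₃ := by
    by_contra hne
    refine hxD (hmax (j := (R, R₃)) ⟨hR, h₃, hne⟩ ?_ (subset_closure ⟨hx, hER₃ hxE⟩))
    refine closure_le _ |>.mpr fun z hz => subset_closure (show z ∈ X ∩ R ∩ R₃ from ?_)
    exact ⟨⟨hz.1.1, hDR (subset_closure hz)⟩, hER₃ ((le_sup_right : D ≤ E) (subset_closure hz))⟩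
  exact hne ((hR₃ h₁ hD₁ hx₁ hx₁D (hxE (Set.mem_insert _ _)).2).trans
    (hR₃ h₂ hD₂ hx₂ hx₂D (hxE (Set.mem_insert_of_mem _ rfl)).2).symm)

/-- The Baer–Suzuki theorem. -/
theorem isPGroup_closure_of_isPGroup_closure_pair [Fact p.Prime] [Finite G] (hX : normalizer X = ⊤)
    (hpair : ∀ x ∈ X, ∀ y ∈ X, IsPGroup p (closure {x, y})) :
    IsPGroup p (closure X) := by
  induction h : Nat.card G using Nat.strong_induction_on generalizing G with
  | _ n ih =>
  have hsub (H : Subgroup G) (hH : H ≠ ⊤) : IsPGroup p (closure (X ∩ H)) := by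
    have hcard : Nat.card H < n := h ▸ card_top (G := G) ▸ card_lt_card_of_lt hH.lt_top
    have hXH : normalizer (H.subtype ⁻¹' X) = ⊤ := by
      refine top_le_iff.mp (le_set_normalizer_iff.mpr fun g _ x hx => ?_)
      simpa using le_set_normalizer_iff.mp hX.ge g trivial x hx
    have hpairH : ∀ x ∈ H.subtype ⁻¹' X, ∀ y ∈ H.subtype ⁻¹' X, IsPGroup p (closure {x, y}) := by
      refine fun x hx y hy => (hpair _ hx _ hy).comap_subtype.to_le (closure_le _ |>.mpr ?_)
      rintro z (rfl | rfl) <;> exact subset_closure (by simp)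
    have hmap := (ih _ hcard hXH hpairH rfl).map H.subtype
    rwa [MonoidHom.map_closure, coe_subtype, Set.image_preimage_eq_inter_range,
      Subtype.range_coe_subtype, SetLike.setOfPred_mem_eq] at hmap
  by_cases hgen : closure X = ⊤
  · exact hgen ▸ (isPGroup_of_closure_eq_top hX hpair hgen hsub).to_subgroup ⊤
  · have hcl := hsub _ hgen
    rwa [Set.inter_eq_left.mpr Subgroup.subset_closure] at hcl

theorem exists_odd_orderOf_conj_eq_inv [Finite G]
    (hO2 : ∀ N : Subgroup G, N.Normal → IsPGroup 2 N → N = ⊥) {t : G} (ht : t * t = 1)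
    (ht1 : t ≠ 1) : ∃ w : G, w ≠ 1 ∧ Odd (orderOf w) ∧ t * w * t⁻¹ = w⁻¹ := by
  by_contra! hno
  have hmul (s : G) (hs : s * s = 1) : ∃ k, (t * s) ^ 2 ^ k = 1 := by
    refine ⟨_, by_contra fun hne => hno _ hne (odd_orderOf_pow_two_pow_factorization
      (orderOf_pos (t * s)).ne') ?_⟩
    rw [← conj_pow, conj_mul_eq_inv_of_mul_self ht hs, inv_pow]
  have hX := normalizer_conjugatesOf_eq_top t
  have hinvol {x : G} (hx : x ∈ conjugatesOf t) : x * x = 1 := by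
    obtain ⟨c, rfl⟩ := isConj_iff.mp hx
    simp [mul_assoc, ← mul_assoc t t, ht]
  have hpair : ∀ x ∈ conjugatesOf t, ∀ y ∈ conjugatesOf t, IsPGroup 2 (closure {x, y}) := by
    intro x hx y hy
    obtain ⟨a, rfl⟩ := isConj_iff.mp hx
    obtain ⟨k, hk⟩ := hmul (a⁻¹ * y * a) (by simp [mul_assoc, ← mul_assoc y y, hinvol hy])
    refine isPGroup_two_closure_pair (hinvol hx) (hinvol hy) (k := k) ?_
    rw [show a * t * a⁻¹ * y = a * (t * (a⁻¹ * y * a)) * a⁻¹ by group, conj_pow, hk]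
    group
  have := hO2 _ (normalizer_eq_top_iff.mp (top_le_iff.mp
    (hX ▸ normalizer_le_normalizer_closure _))) (isPGroup_closure_of_isPGroup_closure_pair hX hpair)
  exact ht1 (mem_bot.mp (this ▸ subset_closure (IsConj.refl t)))

end BaerSuzuki

section Action

variable {G Ω : Type*} [Group G] [MulAction G Ω]

theorem card_fixedBy_mul_card_le [Finite Ω] {t : G} {W : Subgroup G}
    (hodd : Odd (Nat.card W)) (hinv : ∀ u ∈ W, t * u * t⁻¹ = u⁻¹)
    (hfree : ∀ x : Ω, Disjoint W (stabilizer G x)) :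
    Nat.card (fixedBy Ω t) * Nat.card W ≤ Nat.card Ω := by
  have hmeet : ∀ u ∈ W, ∀ a ∈ fixedBy Ω t, u • a ∈ fixedBy Ω t → u = 1 := by
    intro u hu a ha hua
    have hinv_a : u⁻¹ • a = u • a := by
      rw [← hinv u hu, mul_smul, mul_smul, inv_smul_eq_iff.mpr ha.symm, hua]
    have huu : u * u ∈ stabilizer G a := by
      rw [mem_stabilizer_iff, mul_smul, ← hinv_a, smul_inv_smul]
    exact eq_one_of_mul_self_eq_one_of_odd_card hodd hu
      ((disjoint_def.mp (hfree a)) (mul_mem hu hu) huu)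
  rw [← Nat.card_prod]
  refine Nat.card_le_card_of_injective (fun p => (p.2 : G) • (p.1 : Ω)) ?_
  rintro ⟨⟨a, ha⟩, ⟨u, hu⟩⟩ ⟨⟨b, hb⟩, ⟨v, hv⟩⟩ h
  have hvu : v⁻¹ * u = 1 := hmeet _ (mul_mem (inv_mem hv) hu) a ha
    (by rw [mul_smul, inv_smul_eq_iff.mpr h]; exact hb)
  obtain rfl : u = v := (inv_mul_eq_one.mp hvu).symm
  obtain rfl : a = b := smul_left_cancel u h
  rfl

theorem IsPGroup.stabilizer_of_isPretransitive {p : ℕ} [IsPretransitive G Ω] {ω : Ω}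
    (h : IsPGroup p (stabilizer G ω)) (x : Ω) : IsPGroup p (stabilizer G x) := by
  obtain ⟨g, rfl⟩ := exists_smul_eq G ω x
  rw [stabilizer_smul_eq_stabilizer_map_conj]
  exact h.map _

theorem three_mul_card_fixedBy_le_of_mul_self_eq_one [Finite G] [Finite Ω]
    (hO2 : ∀ N : Subgroup G, N.Normal → IsPGroup 2 N → N = ⊥)
    (hstab : ∀ x : Ω, IsPGroup 2 (stabilizer G x)) {t : G} (ht : t * t = 1) (ht1 : t ≠ 1) :
    3 * Nat.card (fixedBy Ω t) ≤ Nat.card Ω := by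
  obtain ⟨w, hw1, hodd, hinv⟩ := exists_odd_orderOf_conj_eq_inv hO2 ht ht1
  have hW : Nat.card (zpowers w) = orderOf w := Nat.card_zpowers w
  have h3 : 3 ≤ orderOf w := by
    obtain ⟨k, hk⟩ := hodd
    have : orderOf w ≠ 1 := mt orderOf_eq_one_iff.mp hw1
    omega
  have hbound := card_fixedBy_mul_card_le (Ω := Ω) (t := t) (hW ▸ hodd)
    (fun u hu => by obtain ⟨k, rfl⟩ := mem_zpowers_iff.mp hu; rw [← conj_zpow, hinv, inv_zpow])
    (fun x => IsPGroup.card.disjoint_of_coprime (hstab x)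
      (Nat.coprime_two_right.mpr (hW ▸ hodd)))
  calc 3 * Nat.card (fixedBy Ω t) ≤ Nat.card (fixedBy Ω t) * orderOf w := by
        rw [mul_comm]; exact Nat.mul_le_mul_left _ h3
    _ ≤ Nat.card Ω := hW ▸ hbound

theorem three_mul_card_fixedBy_le [Finite G] [Finite Ω]
    (hO2 : ∀ N : Subgroup G, N.Normal → IsPGroup 2 N → N = ⊥)
    (hstab : ∀ x : Ω, IsPGroup 2 (stabilizer G x)) {g : G} (hg : g ≠ 1) :
    3 * Nat.card (fixedBy Ω g) ≤ Nat.card Ω := by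
  obtain hempty | ⟨x, hx⟩ := (fixedBy Ω g).eq_empty_or_nonempty
  · simp [hempty]
  have h2 : 2 ∣ orderOf g := by
    rw [← Subgroup.orderOf_mk (H := stabilizer G x) g hx]
    exact (hstab x).dvd_orderOf (Subtype.coe_ne_coe.mp hg)
  set t := g ^ (orderOf g / 2)
  have ht : orderOf t = 2 := orderOf_pow_orderOf_div (orderOf_pos g).ne' h2
  have hsub : fixedBy Ω g ⊆ fixedBy Ω t := by
    simpa only [zpow_natCast] using fixedBy_subset_fixedBy_zpow Ω g ((orderOf g / 2 : ℕ) : ℤ)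
  calc 3 * Nat.card (fixedBy Ω g) ≤ 3 * Nat.card (fixedBy Ω t) :=
        Nat.mul_le_mul_left 3 (Nat.card_mono (Set.toFinite _) hsub)
    _ ≤ Nat.card Ω := three_mul_card_fixedBy_le_of_mul_self_eq_one hO2 hstab
        (by rw [← sq, ← ht, pow_orderOf_eq_one]) (by simp [← orderOf_eq_one_iff, ht])

end Action

theorem minimal_degree_of_two_group_stabiliser_general
    {G Ω : Type*} [Group G] [Finite G] [Finite Ω] [MulAction G Ω]
    [MulAction.IsPretransitive G Ω]
    (hO2 : ∀ N : Subgroup G, N.Normal → IsPGroup 2 N → N = ⊥)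
    (ω : Ω) (hstab : IsPGroup 2 (MulAction.stabilizer G ω)) :
    ∀ g : G, g ≠ 1 → 2 * Nat.card Ω ≤ 3 * Nat.card {x : Ω | g • x ≠ x} := by
  intro g hg
  have hfix := three_mul_card_fixedBy_le hO2 hstab.stabilizer_of_isPretransitive hg
  have hcompl : Nat.card (fixedBy Ω g) + Nat.card {x : Ω | g • x ≠ x} = Nat.card Ω := by
    rw [Nat.card_coe_set_eq, Nat.card_coe_set_eq]
    exact Set.ncard_add_ncard_compl _
  omega

/-- **Theorem (main).** Let `G` be a finite group acting faithfully and transitively on a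
finite set `Ω` such that every normal `2`-subgroup of `G` is trivial (`O₂(G) = 1`) and the
stabiliser of a point `ω` is a `2`-group.  Then the minimal degree of `G` on `Ω` is at least
`2|Ω|/3`:  every non-identity `g ∈ G` satisfies `3·|supp_Ω(g)| ≥ 2·|Ω|`. -/
theorem minimal_degree_of_two_group_stabiliser
    {G Ω : Type*} [Group G] [Finite G] [Finite Ω] [MulAction G Ω]
    [FaithfulSMul G Ω] [MulAction.IsPretransitive G Ω]
    (hO2 : ∀ N : Subgroup G, N.Normal → IsPGroup 2 N → N = ⊥)
    (ω : Ω) (hstab : IsPGroup 2 (MulAction.stabilizer G ω)) :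
    ∀ g : G, g ≠ 1 → 2 * Nat.card Ω ≤ 3 * Nat.card {x : Ω | g • x ≠ x} :=
  minimal_degree_of_two_group_stabiliser_general hO2 ω hstab
end

section
/- Let X be a finite group acting on a finite set Ω, let Y be a normal subgroup of X, let x ∈ X and let ω ∈ Ω. Then |Fix_{ω^Y}(x)| · |x^Y| = |x^Y ∩ X_ω| · |ω^Y|, where ω^Y is the Y-orbit of ω, x^Y = { y⁻¹ x y : y ∈ Y } is the Y-conjugacy class of x, Fix_{ω^Y}(x) is the set of points of ω^Y fixed by x, and X_ω is the stabiliser of ω in X. -/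
/-!
Count the `y ∈ Y` with `y⁻¹ x y ∈ X_ω`, equivalently with `x` fixing `y • ω`, in two ways: through
`y ↦ y • ω` onto `Fix_{ω^Y}(x)`, whose fibres are cosets of `Y_ω`, and through `y ↦ y⁻¹ x y` onto
`x^Y ∩ X_ω`, whose fibres are cosets of `C_Y(x)`. By orbit–stabilizer, `|Y_ω| · |ω^Y| = |Y|` and
`|C_Y(x)| · |x^Y| = |Y|`.
-/

open MulAction

namespace MulAction

variable {G α β : Type*} [Group G] [MulAction G α] [MulAction G β]

theorem orbitProdStabilizerEquivGroup_smul (a : α) (p : orbit G a × stabilizer G a) :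
    orbitProdStabilizerEquivGroup G a p • a = p.1 := by
  have hmk : (orbitProdStabilizerEquivGroup G a p : G ⧸ stabilizer G a) =
      orbitEquivQuotientStabilizer G a p.1 :=
    congrArg Prod.fst (Subgroup.groupEquivQuotientProdSubgroup.apply_symm_apply _)
  have := congrArg Subtype.val ((orbitEquivQuotientStabilizer G a).symm_apply_apply p.1)
  rwa [← hmk] at this

theorem card_setOf_smul_mem_eq_card_mul_card_stabilizer {a : α} {T : Set α}
    (hT : T ⊆ orbit G a) :
    Nat.card {g : G | g • a ∈ T} = Nat.card T * Nat.card (stabilizer G a) :=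
  calc Nat.card {g : G | g • a ∈ T}
      = Nat.card {p : orbit G a × stabilizer G a // (p.1 : α) ∈ T} :=
        Nat.card_congr ((orbitProdStabilizerEquivGroup G a).subtypeEquiv fun p =>
          (congrArg (· ∈ T) (orbitProdStabilizerEquivGroup_smul a p)).to_iff.symm).symm
    _ = Nat.card ({o : orbit G a // (o : α) ∈ T} × stabilizer G a) :=
        Nat.card_congr (Equiv.prodSubtypeFstEquivSubtypeProd (β := stabilizer G a)
          (p := fun o : orbit G a => (o : α) ∈ T))
    _ = Nat.card T * Nat.card (stabilizer G a) := by
        rw [Nat.card_prod, Nat.card_congr (Equiv.subtypeSubtypeEquivSubtype fun h => hT h)]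

theorem card_setOf_smul_mem_mul_card_orbit [Finite G] {a : α} {T : Set α}
    (hT : T ⊆ orbit G a) :
    Nat.card {g : G | g • a ∈ T} * Nat.card (orbit G a) = Nat.card T * Nat.card G := by
  rw [card_setOf_smul_mem_eq_card_mul_card_stabilizer hT,
    ← Subgroup.card_mul_index (stabilizer G a), index_stabilizer, ← Nat.card_coe_set_eq, mul_assoc]

theorem card_mul_card_orbit_eq_of_smul_mem_iff_inv_smul_mem [Finite G] {a : α} {b : β}
    {T : Set α} {U : Set β} (hT : T ⊆ orbit G a) (hU : U ⊆ orbit G b)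
    (hTU : ∀ g : G, g • a ∈ T ↔ g⁻¹ • b ∈ U) :
    Nat.card T * Nat.card (orbit G b) = Nat.card U * Nat.card (orbit G a) := by
  have hcount : Nat.card {g : G | g • a ∈ T} = Nat.card {g : G | g • b ∈ U} :=
    Nat.card_congr ((Equiv.inv G).subtypeEquiv hTU)
  have hT' := card_setOf_smul_mem_mul_card_orbit hT
  have hU' := card_setOf_smul_mem_mul_card_orbit hU
  refine Nat.eq_of_mul_eq_mul_right (Nat.card_pos (α := G)) ?_
  calc Nat.card T * Nat.card (orbit G b) * Nat.card G
      = Nat.card {g : G | g • a ∈ T} * Nat.card (orbit G b) * Nat.card (orbit G a) := by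
        rw [mul_right_comm, ← hT', mul_right_comm]
    _ = Nat.card U * Nat.card (orbit G a) * Nat.card G := by
        rw [hcount, hU', mul_right_comm]

theorem conj_mem_stabilizer_iff {g x : G} {a : α} :
    g⁻¹ * x * g ∈ stabilizer G a ↔ x • g • a = g • a := by
  rw [mem_stabilizer_iff, mul_smul, mul_smul, inv_smul_eq_iff]

end MulAction

theorem fix_mul_class_eq_class_inter_stabilizer_mul_orbit_general
    {X Ω : Type*} [Group X] [Finite X] [MulAction X Ω]
    (Y : Subgroup X) (x : X) (ω : Ω) :
    Nat.card {δ : Ω | δ ∈ MulAction.orbit Y ω ∧ x • δ = δ}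
        * Nat.card {z : X | ∃ y ∈ Y, y⁻¹ * x * y = z}
      = Nat.card ({z : X | ∃ y ∈ Y, y⁻¹ * x * y = z} ∩ (MulAction.stabilizer X ω : Set X) : Set X)
        * Nat.card (MulAction.orbit Y ω) := by
  -- `Y` acting on `X` by conjugation, in place of the default action by left multiplication
  let _ : MulAction Y X := compHom X (MulAut.conj.comp Y.subtype)
  have hconj (y : Y) : y⁻¹ • x = (y : X)⁻¹ * x * y := by
    show ((y⁻¹ : Y) : X) * x * ((y⁻¹ : Y) : X)⁻¹ = _
    simp
  have horbit : orbit Y x = {z : X | ∃ y ∈ Y, y⁻¹ * x * y = z} := by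
    ext z
    refine ⟨?_, ?_⟩
    · rintro ⟨y, rfl⟩
      exact ⟨(y⁻¹ : Y), (y⁻¹).2, by rw [← hconj, inv_inv]⟩
    · rintro ⟨y, hy, rfl⟩
      exact ⟨⟨y, hy⟩⁻¹, hconj ⟨y, hy⟩⟩
  rw [← horbit]
  refine card_mul_card_orbit_eq_of_smul_mem_iff_inv_smul_mem (fun _ h => h.1)
    Set.inter_subset_left fun y => ?_
  rw [Set.mem_inter_iff, hconj, SetLike.mem_coe, conj_mem_stabilizer_iff]
  exact and_congr (iff_of_true (mem_orbit ω y) (hconj y ▸ mem_orbit x y⁻¹)) Iff.rfl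

/-- Let `X` be a finite group acting on a finite set `Ω`, let `Y ⊴ X`, let `x ∈ X` and
`ω ∈ Ω`.  Then `|Fix_{ω^Y}(x)| · |x^Y| = |x^Y ∩ X_ω| · |ω^Y|`, where `ω^Y` is the `Y`-orbit
of `ω` and `x^Y = {y⁻¹xy : y ∈ Y}` is the `Y`-conjugacy class of `x`. -/
theorem fix_mul_class_eq_class_inter_stabilizer_mul_orbit
    {X Ω : Type*} [Group X] [Finite X] [Finite Ω] [MulAction X Ω]
    (Y : Subgroup X) (hY : Y.Normal) (x : X) (ω : Ω) :
    Nat.card {δ : Ω | δ ∈ MulAction.orbit Y ω ∧ x • δ = δ}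
        * Nat.card {z : X | ∃ y ∈ Y, y⁻¹ * x * y = z}
      = Nat.card ({z : X | ∃ y ∈ Y, y⁻¹ * x * y = z} ∩ (MulAction.stabilizer X ω : Set X) : Set X)
        * Nat.card (MulAction.orbit Y ω) :=
  fix_mul_class_eq_class_inter_stabilizer_mul_orbit_general Y x ω
end

section
/- Let G be a finite group acting faithfully and transitively on a finite set Ω such that every normal 2-subgroup of G is trivial and such that the point stabiliser G_ω is a 2-group. Let Q be a Sylow 2-subgroup of G containing G_ω and let B = ω^Q be the Q-orbit of ω. Then B is a block for the action of G on Ω, the setwise stabiliser of B in G is exactly Q, and G acts faithfully on the set Σ = { B^g : g ∈ G } of translates of B. -/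
open Pointwise

/-!
The block property and `Stab_G(B) = Q` only need `G_ω ≤ Q`. An element fixing every translate
`x • B` lies in every conjugate `x Q x⁻¹` of `Stab_G(B) = Q`, i.e. in the normal core of `Q`;
this core is a normal `2`-subgroup, hence trivial since `O₂(G) = 1`.
-/

namespace MulAction

theorem mem_normalCore_stabilizer_iff {G α : Type*} [Group G] [MulAction G α] {s : Set α}
    {g : G} : g ∈ (stabilizer G s).normalCore ↔ ∀ x : G, g • x • s = x • s := by
  have conj_mem_iff (x : G) : x⁻¹ * g * x⁻¹⁻¹ ∈ stabilizer G s ↔ g • x • s = x • s := by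
    rw [mem_stabilizer_iff, inv_inv, mul_smul, mul_smul, inv_smul_eq_iff]
  exact ⟨fun hg x => (conj_mem_iff x).mp (hg x⁻¹),
    fun hg b => by simpa only [inv_inv] using (conj_mem_iff b⁻¹).mpr (hg b⁻¹)⟩

end MulAction

theorem Subgroup.normalCore_eq_bot_of_isPGroup {G : Type*} [Group G] {p : ℕ} {H : Subgroup G}
    (hH : IsPGroup p H) (hOp : ∀ N : Subgroup G, N.Normal → IsPGroup p N → N = ⊥) :
    H.normalCore = ⊥ :=
  hOp _ H.normalCore_normal (hH.to_le H.normalCore_le)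

theorem orbit_of_sylow_is_block_with_faithful_action_general
    {G Ω : Type*} [Group G] [MulAction G Ω]
    (hO2 : ∀ N : Subgroup G, N.Normal → IsPGroup 2 N → N = ⊥)
    (ω : Ω)
    (Q : Sylow 2 G) (hQω : MulAction.stabilizer G ω ≤ (Q : Subgroup G)) :
    MulAction.IsBlock G (MulAction.orbit (Q : Subgroup G) ω) ∧
    MulAction.stabilizer G (MulAction.orbit (Q : Subgroup G) ω) = (Q : Subgroup G) ∧
    (∀ g : G,
      (∀ x : G, g • (x • (MulAction.orbit (Q : Subgroup G) ω))
          = x • (MulAction.orbit (Q : Subgroup G) ω)) → g = 1) := by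
  have hstab_orbit := MulAction.stabilizer_orbit_eq hQω
  refine ⟨MulAction.IsBlock.of_orbit hQω, hstab_orbit, fun g hg => ?_⟩
  have hg_core := MulAction.mem_normalCore_stabilizer_iff.mpr hg
  rwa [hstab_orbit, Subgroup.normalCore_eq_bot_of_isPGroup Q.isPGroup' hO2,
    Subgroup.mem_bot] at hg_core

/-- Let `G` be a finite group acting faithfully and transitively on a finite set `Ω` with
`O₂(G) = 1` and with point stabiliser `G_ω` a `2`-group.  Let `Q` be a Sylow `2`-subgroup of
`G` containing `G_ω` and let `B = ω^Q` be the `Q`-orbit of `ω`.  Then `B` is a block for the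
action of `G` on `Ω`, the setwise stabiliser of `B` in `G` is exactly `Q`, and `G` acts
faithfully on the set `Σ = {B^g : g ∈ G}` of translates of `B` (i.e. only the identity fixes
every translate of `B` setwise). -/
theorem orbit_of_sylow_is_block_with_faithful_action
    {G Ω : Type*} [Group G] [Finite G] [Finite Ω] [MulAction G Ω]
    [FaithfulSMul G Ω] [MulAction.IsPretransitive G Ω]
    (hO2 : ∀ N : Subgroup G, N.Normal → IsPGroup 2 N → N = ⊥)
    (ω : Ω) (hstab : IsPGroup 2 (MulAction.stabilizer G ω))
    (Q : Sylow 2 G) (hQω : MulAction.stabilizer G ω ≤ (Q : Subgroup G)) :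
    MulAction.IsBlock G (MulAction.orbit (Q : Subgroup G) ω) ∧
    MulAction.stabilizer G (MulAction.orbit (Q : Subgroup G) ω) = (Q : Subgroup G) ∧
    (∀ g : G,
      (∀ x : G, g • (x • (MulAction.orbit (Q : Subgroup G) ω))
          = x • (MulAction.orbit (Q : Subgroup G) ω)) → g = 1) :=
  orbit_of_sylow_is_block_with_faithful_action_general hO2 ω Q hQω
end

section
/- Let G be a finite group acting faithfully and transitively on a finite set Ω, let K be a normal subgroup of G, and suppose that for some (equivalently, every) ω ∈ Ω the stabiliser G_ω is a Sylow 2-subgroup of G. Then for every ω ∈ Ω, the normal subgroup K acts faithfully on the K-orbit ω^K; that is, the only element of K fixing every point of ω^K is the identity. -/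
/-!
The kernel `N` of `K` on `ω^K` is normal in `K` and lies in the Sylow `2`-subgroup `G_ω`, so it
is a normal `2`-subgroup of `K`. Such a subgroup lies in every Sylow `2`-subgroup of `K`, and as
`K ⊴ G` the Sylow subgroups of `K` are the traces on `K` of those of `G`; hence `N` lies in every
Sylow `2`-subgroup of `G`. All point stabilisers are Sylow `2`-subgroups (they are conjugate), so
`N` fixes `Ω` pointwise and is trivial by faithfulness.
-/

open MulAction Pointwise

instance MulAction.fixingSubgroup_orbit_normal {M α : Type*} [Group M] [MulAction M α] (a : α) :
    (fixingSubgroup M (orbit M a)).Normal where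
  conj_mem x hx g := by
    rw [mem_fixingSubgroup_iff] at hx ⊢
    intro b hb
    rw [mul_smul, mul_smul, hx _ (mem_orbit_of_mem_orbit g⁻¹ hb), smul_inv_smul]

theorem IsPGroup.fixingSubgroup_orbit {G Ω : Type*} [Group G] [MulAction G Ω] {p : ℕ}
    {ω : Ω} (h : IsPGroup p (stabilizer G ω)) (K : Subgroup G) :
    IsPGroup p (fixingSubgroup K (orbit K ω)) :=
  h.comap_subtype.to_le fun _ hk => hk ⟨ω, mem_orbit_self ω⟩

theorem IsPGroup.map_subtype_le_sylow {G : Type*} [Group G] [Finite G] {p : ℕ} [Fact p.Prime]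
    {K : Subgroup G} [K.Normal] {N : Subgroup K} [N.Normal] (hN : IsPGroup p N)
    (S : Sylow p G) : N.map K.subtype ≤ S := by
  obtain ⟨P⟩ : Nonempty (Sylow p K) := inferInstance
  obtain ⟨Q, hQ⟩ := Sylow.exists_comap_subtype_eq P
  obtain ⟨g, rfl⟩ := exists_smul_eq G Q S
  rintro _ ⟨x, hx, rfl⟩
  have hx' : x ∈ MulAut.conjNormal g • (P : Subgroup K) :=
    hN.le_sylow_of_normal (MulAut.conjNormal (H := K) g • P) hx
  change (x : G) ∈ MulAut.conj g • (Q : Subgroup G)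
  rw [Subgroup.mem_pointwise_smul_iff_inv_smul_mem] at hx' ⊢
  rw [← hQ, Subgroup.mem_comap, MulAut.smul_def, Subgroup.coe_subtype,
    MulAut.conjNormal_inv_apply] at hx'
  rwa [MulAut.smul_def, MulAut.conj_inv_apply]

theorem Sylow.exists_eq_stabilizer_of_isPretransitive {G Ω : Type*} [Group G] [MulAction G Ω]
    [IsPretransitive G Ω] {p : ℕ} {ω₀ : Ω}
    (h : ∃ S : Sylow p G, (S : Subgroup G) = stabilizer G ω₀) (ω : Ω) :
    ∃ T : Sylow p G, (T : Subgroup G) = stabilizer G ω := by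
  obtain ⟨S, hS⟩ := h
  obtain ⟨g, rfl⟩ := exists_smul_eq G ω₀ ω
  refine ⟨g • S, ?_⟩
  rw [stabilizer_smul_eq_stabilizer_map_conj, ← hS]
  rfl

theorem normal_subgroup_faithful_on_orbits_general
    {G Ω : Type*} [Group G] [Finite G] [MulAction G Ω]
    [FaithfulSMul G Ω] [MulAction.IsPretransitive G Ω]
    (K : Subgroup G) (hK : K.Normal)
    (ω₀ : Ω) (hsyl : ∃ S : Sylow 2 G, (S : Subgroup G) = MulAction.stabilizer G ω₀)
    (ω : Ω) (k : K) (hfix : ∀ δ ∈ MulAction.orbit K ω, (k : G) • δ = δ) :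
    (k : G) = 1 := by
  have hk : k ∈ fixingSubgroup K (orbit K ω) := (mem_fixingSubgroup_iff K).mpr hfix
  obtain ⟨T, hT⟩ := Sylow.exists_eq_stabilizer_of_isPretransitive hsyl ω
  have hN : IsPGroup 2 (fixingSubgroup K (orbit K ω)) :=
    (hT ▸ T.isPGroup').fixingSubgroup_orbit K
  refine eq_of_smul_eq_smul (α := Ω) fun δ => ?_
  obtain ⟨S, hS⟩ := Sylow.exists_eq_stabilizer_of_isPretransitive hsyl δ
  have hkS : (k : G) ∈ stabilizer G δ := hS ▸ hN.map_subtype_le_sylow S ⟨k, hk, rfl⟩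
  rw [one_smul]
  exact hkS

/-- Let `G` be a finite group acting faithfully and transitively on a finite set `Ω`, let
`K ⊴ G`, and suppose that for some `ω₀ ∈ Ω` the stabiliser `G_{ω₀}` is a Sylow `2`-subgroup
of `G`.  Then for every `ω ∈ Ω` the normal subgroup `K` acts faithfully on the `K`-orbit
`ω^K`:  the only element of `K` fixing every point of `ω^K` is the identity. -/
theorem normal_subgroup_faithful_on_orbits
    {G Ω : Type*} [Group G] [Finite G] [Finite Ω] [MulAction G Ω]
    [FaithfulSMul G Ω] [MulAction.IsPretransitive G Ω]
    (K : Subgroup G) (hK : K.Normal)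
    (ω₀ : Ω) (hsyl : ∃ S : Sylow 2 G, (S : Subgroup G) = MulAction.stabilizer G ω₀)
    (ω : Ω) (k : K) (hfix : ∀ δ ∈ MulAction.orbit K ω, (k : G) • δ = δ) :
    (k : G) = 1 :=
  normal_subgroup_faithful_on_orbits_general K hK ω₀ hsyl ω k hfix
end

section
/- Let Δ be a finite set, let ℓ ≥ 1, let a_1, …, a_ℓ be permutations of Δ and let σ be a non-identity permutation of {1, …, ℓ}. Consider the permutation x of the Cartesian power Δ^ℓ defined by x(δ_1, …, δ_ℓ) = (δ'_1, …, δ'_ℓ) where δ'_i = a_{σ⁻¹(i)}(δ_{σ⁻¹(i)}) for each i. Then the number of fixed points of x on Δ^ℓ is at most |Δ|^{ℓ−1}; in particular, if |Δ| ≥ 3 then x fixes at most |Δ^ℓ|/3 points. -/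
/-! A fixed point `δ` satisfies `δ (σ i) = a i (δ i)` for every `i`. If `σ` moves `j`, the
coordinate `δ (σ j)` is thus determined by the coordinate `δ j` at a different position, so
restricting fixed points to the positions other than `σ j` is injective. -/

theorem apply_perm_eq_of_fixed {ι Δ : Type*} {a : ι → Δ → Δ} {σ : Equiv.Perm ι}
    {δ : ι → Δ} (hδ : (fun i => a (σ⁻¹ i) (δ (σ⁻¹ i))) = δ) (i : ι) :
    δ (σ i) = a i (δ i) := by
  simpa using (congrFun hδ (σ i)).symm

theorem card_fixedPoints_le_pow_pred {ι Δ : Type*} [Fintype ι] [Fintype Δ]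
    (a : ι → Δ → Δ) {σ : Equiv.Perm ι} (hσ : σ ≠ 1) :
    Nat.card {δ : ι → Δ | (fun i => a (σ⁻¹ i) (δ (σ⁻¹ i))) = δ}
      ≤ Fintype.card Δ ^ (Fintype.card ι - 1) := by
  classical
  obtain ⟨j, hj⟩ : ∃ j, σ j ≠ j := by
    by_contra! h
    exact hσ (Equiv.ext h)
  have restrict_injective : Function.Injective
      (fun (δ : {δ : ι → Δ | (fun i => a (σ⁻¹ i) (δ (σ⁻¹ i))) = δ})
        (i : {i // i ≠ σ j}) => δ.1 i) := by
    rintro ⟨δ, hδ⟩ ⟨δ', hδ'⟩ h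
    have eq_off (i : ι) (hi : i ≠ σ j) : δ i = δ' i := congrFun h ⟨i, hi⟩
    refine Subtype.ext (funext fun i => (?_ : δ i = δ' i))
    by_cases hi : i = σ j
    · rw [hi, apply_perm_eq_of_fixed hδ, apply_perm_eq_of_fixed hδ', eq_off j hj.symm]
    · exact eq_off i hi
  calc _ ≤ Nat.card ({i // i ≠ σ j} → Δ) := Nat.card_le_card_of_injective _ restrict_injective
    _ = _ := by simp [Nat.card_eq_fintype_card, Fintype.card_subtype_compl]

/-- Let `Δ` be a finite set, `ℓ ≥ 1`, `a_1, …, a_ℓ` permutations of `Δ`, and `σ ≠ 1` a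
permutation of `{1, …, ℓ}`.  The element `x = (a_1, …, a_ℓ)σ` acts on `Δ^ℓ` by
`x(δ)_i = a_{σ⁻¹(i)}(δ_{σ⁻¹(i)})`.  Then `x` fixes at most `|Δ|^{ℓ-1}` points of `Δ^ℓ`;
in particular, if `|Δ| ≥ 3` then `x` fixes at most `|Δ^ℓ|/3` points. -/
theorem wreath_product_fixed_points_of_nontrivial_top
    {Δ : Type*} [Fintype Δ] {ℓ : ℕ} (hℓ : 1 ≤ ℓ)
    (a : Fin ℓ → Equiv.Perm Δ) (σ : Equiv.Perm (Fin ℓ)) (hσ : σ ≠ 1) :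
    Nat.card {δ : Fin ℓ → Δ | (fun i => a (σ⁻¹ i) (δ (σ⁻¹ i))) = δ}
        ≤ Fintype.card Δ ^ (ℓ - 1) ∧
    (3 ≤ Fintype.card Δ →
      3 * Nat.card {δ : Fin ℓ → Δ | (fun i => a (σ⁻¹ i) (δ (σ⁻¹ i))) = δ}
        ≤ Fintype.card Δ ^ ℓ) := by
  have card_le : Nat.card {δ : Fin ℓ → Δ | (fun i => a (σ⁻¹ i) (δ (σ⁻¹ i))) = δ}
      ≤ Fintype.card Δ ^ (ℓ - 1) := by
    simpa using card_fixedPoints_le_pow_pred (fun i => a i) hσ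
  refine ⟨card_le, fun h3 => ?_⟩
  calc 3 * Nat.card {δ : Fin ℓ → Δ | (fun i => a (σ⁻¹ i) (δ (σ⁻¹ i))) = δ}
      ≤ Fintype.card Δ * Fintype.card Δ ^ (ℓ - 1) := Nat.mul_le_mul h3 card_le
    _ = Fintype.card Δ ^ ℓ := by rw [← pow_succ', Nat.sub_add_cancel hℓ]
end

section
/- Let n ≥ 5 and let P be a Sylow 2-subgroup of the alternating group Alt(n). In the action of Alt(n) on the set of cosets of P by multiplication, every non-identity element g ∈ Alt(n) fixes at most one third of the cosets; that is, 3·|Fix(g)| ≤ [Alt(n) : P]. -/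
/-!
A coset of `P` fixed by `g ≠ 1` has a `2`-group as stabilizer, so `g` is a `2`-element and some
power `t` of `g` is an involution with `Fix(g) ⊆ Fix(t)`. In `Alt(n)`, `n ≥ 5`, there is an
element `γ` of order `3` inverted by `t`: a commutator `⁅c, t⁆` with `c` a transposition moving a
fixed point of `t`, or, if `t` is fixed-point-free, a `3`-cycle `c` whose `t`-conjugate has
disjoint support. If `x` and `γᵏ • x` are both fixed by `t`, then `γ²ᵏ` fixes `x`; having odd
order it lies in no `2`-group, so `γᵏ = 1`. Hence `Fix(t)`, `γ • Fix(t)`, `γ² • Fix(t)` are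
disjoint and `3·|Fix(g)| ≤ 3·|Fix(t)| ≤ [Alt(n) : P]`.
-/

open MulAction
open scoped commutatorElement

section PGroup
variable {G : Type*} [Group G] {p : ℕ} {P : Subgroup G}

theorem IsPGroup.stabilizer_quotient (hP : IsPGroup p P) (x : G ⧸ P) :
    IsPGroup p (stabilizer G x) := by
  obtain ⟨g, rfl⟩ := QuotientGroup.mk_surjective x
  have hg : (g : G ⧸ P) = g • ((1 : G) : G ⧸ P) := by simp
  rw [hg, stabilizer_smul_eq_stabilizer_map_conj, MulAction.stabilizer_quotient]
  exact hP.map _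

theorem IsPGroup.eq_one_of_smul_eq (hP : IsPGroup p P) {g : G} (hg : (orderOf g).Coprime p)
    {x : G ⧸ P} (hx : g • x = x) : g = 1 := by
  obtain ⟨k, hk⟩ := hP.stabilizer_quotient x ⟨g, mem_stabilizer_iff.mpr hx⟩
  have hdvd : orderOf g ∣ p ^ k :=
    orderOf_dvd_of_pow_eq_one (by simpa using congrArg Subtype.val hk)
  exact orderOf_eq_one_iff.mp (Nat.Coprime.eq_one_of_dvd (hg.pow_right k) hdvd)

theorem IsPGroup.exists_orderOf_pow_eq_prime [Fact p.Prime] (hP : IsPGroup p P) {g : G}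
    (hg : g ≠ 1) {x : G ⧸ P} (hx : g • x = x) : ∃ k : ℕ, orderOf (g ^ k) = p := by
  obtain ⟨j, hj⟩ :=
    IsPGroup.iff_orderOf.mp (hP.stabilizer_quotient x) ⟨g, mem_stabilizer_iff.mpr hx⟩
  rw [Subgroup.orderOf_mk] at hj
  have hj0 : j ≠ 0 := by
    rintro rfl
    exact hg (orderOf_eq_one_iff.mp (by simpa using hj))
  refine ⟨orderOf g / p, orderOf_pow_orderOf_div ?_ ?_⟩
  · simp [hj, (Fact.out : p.Prime).ne_zero]
  · exact hj ▸ dvd_pow_self p hj0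

theorem IsPGroup.eq_one_of_smul_mem_fixedBy (hP : IsPGroup p P) {t w : G}
    (htw : t⁻¹ * w * t = w⁻¹) (hodd : Odd (orderOf w)) (hcop : (orderOf w).Coprime p)
    {y : G ⧸ P} (hy : y ∈ fixedBy (G ⧸ P) t) (hwy : w • y ∈ fixedBy (G ⧸ P) t) : w = 1 := by
  have hinv : w⁻¹ • y = w • y := by
    rw [← htw, mul_smul, mul_smul, hy, inv_smul_eq_iff, hwy]
  have hsq : (w ^ 2) • y = y := by rw [sq, mul_smul, ← hinv, smul_inv_smul]
  have hsq1 : w ^ 2 = 1 := hP.eq_one_of_smul_eq (hcop.coprime_dvd_left (orderOf_pow_dvd 2)) hsq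
  exact orderOf_eq_one_iff.mp (Nat.Coprime.eq_one_of_dvd (Nat.coprime_two_right.mpr hodd)
    (orderOf_dvd_of_pow_eq_one hsq1))

theorem IsPGroup.orderOf_mul_card_fixedBy_le [Finite (G ⧸ P)] (hP : IsPGroup p P) {t c : G}
    (htc : t⁻¹ * c * t = c⁻¹) (hodd : Odd (orderOf c)) (hcop : (orderOf c).Coprime p) :
    orderOf c * Nat.card (fixedBy (G ⧸ P) t) ≤ Nat.card (G ⧸ P) := by
  have hinj : Function.Injective
      (fun wy : Subgroup.zpowers c × fixedBy (G ⧸ P) t => (wy.1 : G) • (wy.2 : G ⧸ P)) := by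
    rintro ⟨⟨w, hw⟩, y⟩ ⟨⟨w', hw'⟩, y'⟩ h
    simp only at h
    have hmem : w⁻¹ * w' ∈ Subgroup.zpowers c := Subgroup.mul_mem _ (Subgroup.inv_mem _ hw) hw'
    have hdvd := orderOf_dvd_of_mem_zpowers hmem
    obtain ⟨m, hm⟩ := hmem
    have hconj : t⁻¹ * (w⁻¹ * w') * t = (w⁻¹ * w')⁻¹ := by
      simpa [← hm, htc] using map_zpow (MulAut.conj t⁻¹) c m
    have hww' : w⁻¹ * w' = 1 := hP.eq_one_of_smul_mem_fixedBy hconj (hodd.of_dvd_nat hdvd)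
      (hcop.coprime_dvd_left hdvd) y'.2 (by rw [mul_smul, ← h, inv_smul_smul]; exact y.2)
    obtain rfl := inv_mul_eq_one.mp hww'
    simpa [Subtype.ext_iff] using h
  simpa [Nat.card_prod, Nat.card_zpowers] using Nat.card_le_card_of_injective _ hinj

end PGroup

theorem inv_mul_commutatorElement_mul_eq_inv {G : Type*} [Group G] {t : G} (ht : t * t = 1)
    (c : G) : t⁻¹ * ⁅c, t⁆ * t = ⁅c, t⁆⁻¹ := by
  have : t⁻¹ = t := inv_eq_of_mul_eq_one_right ht
  simp only [commutatorElement_def, mul_inv_rev, inv_inv, this, mul_assoc, ht, mul_one]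

namespace Equiv.Perm
variable {α : Type*}

theorem orderOf_commutatorElement_of_disjoint {c σ : Perm α} (h : Disjoint c (σ * c * σ⁻¹)) :
    orderOf ⁅c, σ⁆ = orderOf c := by
  have hc : ⁅c, σ⁆ = c * (σ * c * σ⁻¹)⁻¹ := by group
  rw [hc, h.inv_right.orderOf, orderOf_inv, ← MulAut.conj_apply, MulEquiv.orderOf_eq,
    Nat.lcm_self]

variable [DecidableEq α] [Fintype α]

theorem commutatorElement_mem_alternatingGroup (c σ : Perm α) : ⁅c, σ⁆ ∈ alternatingGroup α := by
  rw [mem_alternatingGroup, map_commutatorElement, commutatorElement_eq_one_iff_commute]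
  exact Commute.all _ _

theorem orderOf_commutatorElement_swap {σ : Perm α} {b f : α} (hb : σ b ≠ b) (hf : σ f = f) :
    orderOf ⁅swap b f, σ⁆ = 3 := by
  have hbf : b ≠ f := by rintro rfl; exact hb hf
  have hσb : σ b ≠ f := fun h => hbf (σ.injective (h.trans hf.symm))
  have hc : ⁅swap b f, σ⁆ = swap f b * swap f (σ b) := by
    rw [commutatorElement_def, swap_inv, mul_assoc _ σ, mul_assoc, ← swap_apply_apply, hf,
      swap_comm b, swap_comm (σ b)]
  rw [hc]
  exact (isThreeCycle_swap_mul_swap_same hbf.symm hσb.symm hb.symm).orderOf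

theorem exists_orderOf_commutatorElement_eq_three_of_forall_ne {σ : Perm α} (hσ : σ * σ = 1)
    (hfix : ∀ x, σ x ≠ x) (hα : 5 ≤ Fintype.card α) : ∃ c : Perm α, orderOf ⁅c, σ⁆ = 3 := by
  have hσσ : ∀ x, σ (σ x) = x := fun x => by rw [← mul_apply, hσ, one_apply]
  have hout : ∀ s : Finset α, s.card < Fintype.card α → ∃ a, a ∉ s := fun s hs => by
    obtain ⟨a, -, ha⟩ := Finset.exists_mem_notMem_of_card_lt_card (t := Finset.univ) hs
    exact ⟨a, ha⟩
  obtain ⟨a₁, -⟩ := hout ∅ (by simp; omega)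
  obtain ⟨a₂, h₂⟩ := hout {a₁, σ a₁} (Finset.card_le_two.trans_lt (by omega))
  obtain ⟨a₃, h₃⟩ := hout {a₁, σ a₁, a₂, σ a₂} (Finset.card_le_four.trans_lt (by omega))
  simp only [Finset.mem_insert, Finset.mem_singleton, not_or] at h₂ h₃
  have hnodup : [a₂, a₁, a₃].Nodup := by simp; grind
  refine ⟨swap a₁ a₂ * swap a₁ a₃, ?_⟩
  have hdisj : Disjoint (swap a₁ a₂ * swap a₁ a₃) (σ * (swap a₁ a₂ * swap a₁ a₃) * σ⁻¹) := by
    rw [disjoint_iff_disjoint_support, support_conj, swap_comm a₁, support_swap_mul_swap hnodup]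
    simp only [Finset.disjoint_left, Finset.mem_insert, Finset.mem_singleton, Finset.mem_map,
      coe_toEmbedding]
    grind
  rw [orderOf_commutatorElement_of_disjoint hdisj]
  exact (isThreeCycle_swap_mul_swap_same (by grind) (by grind) (by grind)).orderOf

theorem exists_orderOf_commutatorElement_eq_three {σ : Perm α} (hσ : orderOf σ = 2)
    (hα : 5 ≤ Fintype.card α) : ∃ c : Perm α, orderOf ⁅c, σ⁆ = 3 := by
  by_cases hfix : ∃ f, σ f = f
  · obtain ⟨f, hf⟩ := hfix
    obtain ⟨b, hb⟩ : ∃ b, σ b ≠ b :=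
      not_forall.mp fun h => by simp [show σ = 1 from Equiv.ext h] at hσ
    exact ⟨swap b f, orderOf_commutatorElement_swap hb hf⟩
  · exact exists_orderOf_commutatorElement_eq_three_of_forall_ne
      (by rw [← sq, ← hσ, pow_orderOf_eq_one]) (fun x hx => hfix ⟨x, hx⟩) hα

end Equiv.Perm

/-- Let `n ≥ 5` and let `P` be a Sylow `2`-subgroup of `Alt(n)`.  In the action of `Alt(n)`
on the cosets of `P` by multiplication, every non-identity `g ∈ Alt(n)` fixes at most one
third of the cosets: `3·|Fix(g)| ≤ [Alt(n) : P]`. -/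
theorem alt_on_sylow_two_cosets_fixed_points
    {n : ℕ} (hn : 5 ≤ n) (P : Sylow 2 (alternatingGroup (Fin n)))
    (g : alternatingGroup (Fin n)) (hg : g ≠ 1) :
    3 * Nat.card {x : alternatingGroup (Fin n) ⧸ (P : Subgroup (alternatingGroup (Fin n))) | g • x = x}
      ≤ Nat.card (alternatingGroup (Fin n) ⧸ (P : Subgroup (alternatingGroup (Fin n)))) := by
  rcases (fixedBy (alternatingGroup (Fin n) ⧸ (P : Subgroup (alternatingGroup (Fin n)))) g
    ).eq_empty_or_nonempty with hempty | ⟨x, hx⟩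
  · simp only [fixedBy] at hempty
    simp [hempty]
  obtain ⟨k, ht⟩ := IsPGroup.exists_orderOf_pow_eq_prime P.isPGroup' hg hx
  set t := g ^ k
  have hσ : orderOf (t : Equiv.Perm (Fin n)) = 2 := by rw [Subgroup.orderOf_coe, ht]
  obtain ⟨c, hc⟩ := Equiv.Perm.exists_orderOf_commutatorElement_eq_three hσ (by simpa using hn)
  let γ : alternatingGroup (Fin n) :=
    ⟨⁅c, t⁆, Equiv.Perm.commutatorElement_mem_alternatingGroup c t⟩
  have hγ : orderOf γ = 3 := by rw [Subgroup.orderOf_mk, hc]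
  have htγ : t⁻¹ * γ * t = γ⁻¹ := Subtype.ext <|
    inv_mul_commutatorElement_mul_eq_inv (by rw [← sq, ← hσ, pow_orderOf_eq_one]) c
  have hcount := IsPGroup.orderOf_mul_card_fixedBy_le P.isPGroup' htγ (by rw [hγ]; decide)
    (by rw [hγ]; decide)
  rw [hγ] at hcount
  calc _ ≤ 3 * Nat.card (fixedBy _ t) := by
        gcongr
        exact Nat.card_mono (Set.toFinite _) fun y hy => by simpa using mem_fixedBy_zpow hy k
    _ ≤ _ := hcount
end

section
/- For n ≥ 2, the number of n×n upper unitriangular matrices M over the field F_2 that are transvections, i.e. that satisfy rank(M − I) = 1, equals (n − 2)·2^{n−1} + 1. -/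
/-!
Subtracting the identity, we count strictly upper triangular rank-one matrices over `𝔽₂`.
A rank-one matrix is an outer product `u vᵀ` of nonzero vectors, unique over `𝔽₂` because
`1` is its only unit, and `u vᵀ` is strictly upper triangular iff every index in the support
of `u` precedes every index in the support of `v`. Dropping the condition `u ≠ 0`, such pairs
correspond to a vector `w` with a marked index `b` where `w b ≠ 0`: the first index of the
support of `v`, with `u` and `v` the parts of `w = u + v` before and from `b`. This gives
`n · 2ⁿ⁻¹` pairs, of which `2ⁿ - 1` have `u = 0`, and `n · 2ⁿ⁻¹ - (2ⁿ - 1) = (n - 2) · 2ⁿ⁻¹ + 1`.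
-/

open Matrix

namespace Matrix

variable {K m n : Type*} [Field K] [Fintype n]

theorem rank_vecMulVec_of_ne_zero {u : m → K} {v : n → K} (hu : u ≠ 0) (hv : v ≠ 0) :
    (vecMulVec u v).rank = 1 := by
  classical
  obtain ⟨j, hj⟩ : ∃ j, v j ≠ 0 := Function.ne_iff.mp hv
  have hrange : LinearMap.range (vecMulVec u v).mulVecLin = Submodule.span K {u} := by
    refine le_antisymm ?_ ((Submodule.span_singleton_le_iff_mem _ _).mpr
      ⟨Pi.single j (v j)⁻¹, ?_⟩)
    · rintro _ ⟨x, rfl⟩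
      simpa [vecMulVec_mulVec] using
        Submodule.smul_mem _ (v ⬝ᵥ x) (Submodule.mem_span_singleton_self u)
    · ext i
      simp [vecMulVec_apply, hj]
  rw [rank, hrange, finrank_span_singleton hu]

theorem exists_eq_vecMulVec_of_rank_eq_one {A : Matrix m n K} (hA : A.rank = 1) :
    ∃ u v, A = vecMulVec u v := by
  classical
  obtain ⟨⟨u, _⟩, _, hspan⟩ := finrank_eq_one_iff'.mp hA
  choose c hc using fun j => hspan ⟨_, LinearMap.mem_range_self A.mulVecLin (Pi.single j 1)⟩
  refine ⟨u, c, ext fun i j => ?_⟩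
  have hcol : c j * u i = A i j := by
    simpa using congrFun (congrArg Subtype.val (hc j)) i
  rw [vecMulVec_apply, ← hcol, mul_comm]

end Matrix

theorem vecMulVec_inj_zmod_two {m n : Type*} {u u' : m → ZMod 2} {v v' : n → ZMod 2}
    (hu : u ≠ 0) (hv : v ≠ 0) (h : vecMulVec u v = vecMulVec u' v') : u = u' ∧ v = v' := by
  have eq_one : ∀ a : ZMod 2, a ≠ 0 → a = 1 := by decide
  have eq_one_of_mul : ∀ a b : ZMod 2, a * b = 1 → a = 1 ∧ b = 1 := by decide
  obtain ⟨i₀, hi₀⟩ : ∃ i, u i ≠ 0 := Function.ne_iff.mp hu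
  obtain ⟨j₀, hj₀⟩ : ∃ j, v j ≠ 0 := Function.ne_iff.mp hv
  have hentry i j : u i * v j = u' i * v' j := congrFun (congrFun h i) j
  obtain ⟨hu', hv'⟩ := eq_one_of_mul _ _ <| by
    rw [← hentry, eq_one _ hi₀, eq_one _ hj₀, one_mul]
  refine ⟨funext fun i => ?_, funext fun j => ?_⟩
  · simpa [eq_one _ hj₀, hv'] using hentry i j₀
  · simpa [eq_one _ hi₀, hu'] using hentry i₀ j

theorem card_pi_apply_ne_zero {ι R : Type*} [Finite ι] [Zero R] [Finite R] (b : ι) :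
    Nat.card {w : ι → R // w b ≠ 0} = (Nat.card R - 1) * Nat.card R ^ (Nat.card ι - 1) := by
  classical
  have := Fintype.ofFinite ι
  have := Fintype.ofFinite R
  rw [Nat.card_congr (((Equiv.funSplitAt b R).subtypeEquiv (p := fun w => w b ≠ 0)
      (q := fun x => x.1 ≠ 0) fun w => Iff.rfl).trans
      (Equiv.prodSubtypeFstEquivSubtypeProd (p := (· ≠ 0)))), Nat.card_prod, Nat.card_fun]
  simp only [Nat.card_eq_fintype_card, Fintype.card_subtype_compl, Fintype.card_subtype_eq]

section SupportPrecedes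

variable {ι R : Type*} [LinearOrder ι]

def SupportPrecedes [Zero R] (u v : ι → R) : Prop :=
  ∀ i j, u i ≠ 0 → v j ≠ 0 → i < j

theorem vecMulVec_apply_eq_zero_of_le_iff [MulZeroClass R] [NoZeroDivisors R] {u v : ι → R} :
    (∀ i j, j ≤ i → vecMulVec u v i j = 0) ↔ SupportPrecedes u v := by
  simp only [SupportPrecedes, vecMulVec_apply, mul_eq_zero, ← not_lt]
  grind

def splitAt [Zero R] (b : ι) (w : ι → R) : (ι → R) × (ι → R) :=
  (fun i => if i < b then w i else 0, fun i => if b ≤ i then w i else 0)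

theorem splitAt_fst_add_snd [AddZeroClass R] (b : ι) (w : ι → R) :
    (splitAt b w).1 + (splitAt b w).2 = w := by
  ext i
  by_cases h : i < b <;> simp [splitAt, h, not_le.mpr, le_of_not_gt]

theorem le_of_splitAt_snd_ne_zero [Zero R] {b j : ι} {w : ι → R}
    (h : (splitAt b w).2 j ≠ 0) : b ≤ j := by
  by_contra hjb
  simp [splitAt, hjb] at h

theorem supportPrecedes_splitAt [Zero R] (b : ι) (w : ι → R) :
    SupportPrecedes (splitAt b w).1 (splitAt b w).2 := by
  intro i j hi hj
  refine lt_of_lt_of_le ?_ (le_of_splitAt_snd_ne_zero hj)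
  by_contra hib
  simp [splitAt, hib] at hi

def splitAtNonzero [Zero R] (x : Σ b : ι, {w : ι → R // w b ≠ 0}) :
    {p : (ι → R) × (ι → R) // p.2 ≠ 0 ∧ SupportPrecedes p.1 p.2} :=
  ⟨splitAt x.1 x.2, Function.ne_iff.mpr ⟨x.1, by simpa [splitAt] using x.2.2⟩,
    supportPrecedes_splitAt _ _⟩

theorem splitAtNonzero_bijective [AddZeroClass R] [WellFoundedLT ι] :
    Function.Bijective (splitAtNonzero (ι := ι) (R := R)) := by
  constructor
  · rintro ⟨b, w, hw⟩ ⟨b', w', hw'⟩ h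
    have h : splitAt b w = splitAt b' w' := congrArg Subtype.val h
    have hsnd j : (splitAt b w).2 j = (splitAt b' w').2 j := by rw [h]
    obtain rfl : b = b' := le_antisymm
      (le_of_splitAt_snd_ne_zero (w := w) (by rw [hsnd]; simpa [splitAt] using hw'))
      (le_of_splitAt_snd_ne_zero (w := w') (by rw [← hsnd]; simpa [splitAt] using hw))
    obtain rfl : w = w' := by
      rw [← splitAt_fst_add_snd b w, ← splitAt_fst_add_snd b w', h]
    rfl
  · rintro ⟨⟨u, v⟩, hv, huv⟩
    obtain ⟨b, hb, hmin⟩ :=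
      exists_minimal_of_wellFoundedLT (fun j => v j ≠ 0) (Function.ne_iff.mp hv)
    have hu i (hi : b ≤ i) : u i = 0 := by
      by_contra h
      exact (huv i b h hb).not_ge hi
    have hv i (hi : i < b) : v i = 0 := by
      by_contra h
      exact hi.not_ge (hmin h hi.le)
    refine ⟨⟨b, u + v, by simpa [hu b le_rfl] using hb⟩, Subtype.ext ?_⟩
    ext i
    · by_cases h : i < b <;> simp [splitAtNonzero, splitAt, h, hv, hu, le_of_not_gt]
    · by_cases h : b ≤ i <;> simp [splitAtNonzero, splitAt, h, hv, hu, lt_of_not_ge]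

theorem card_supportPrecedes [Finite ι] [AddZeroClass R] [Finite R] :
    Nat.card {p : (ι → R) × (ι → R) // p.2 ≠ 0 ∧ SupportPrecedes p.1 p.2} =
      Nat.card ι * ((Nat.card R - 1) * Nat.card R ^ (Nat.card ι - 1)) := by
  have := Fintype.ofFinite ι
  rw [← Nat.card_eq_of_bijective _ splitAtNonzero_bijective, Nat.card_sigma]
  simp [card_pi_apply_ne_zero]

theorem card_supportPrecedes_of_ne_zero [Finite ι] [AddZeroClass R] [Finite R] :
    Nat.card {p : (ι → R) × (ι → R) // p.1 ≠ 0 ∧ p.2 ≠ 0 ∧ SupportPrecedes p.1 p.2} +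
        (Nat.card R ^ Nat.card ι - 1) =
      Nat.card ι * ((Nat.card R - 1) * Nat.card R ^ (Nat.card ι - 1)) := by
  have hsplit : {p : (ι → R) × (ι → R) | p.2 ≠ 0 ∧ SupportPrecedes p.1 p.2} =
      {p | p.1 ≠ 0 ∧ p.2 ≠ 0 ∧ SupportPrecedes p.1 p.2} ∪ Prod.mk 0 '' {0}ᶜ := by
    ext ⟨u, v⟩
    by_cases hu : u = 0
    · simp [hu, SupportPrecedes]
    · simp [hu, Ne.symm hu]
  have hdisj : Disjoint {p : (ι → R) × (ι → R) | p.1 ≠ 0 ∧ p.2 ≠ 0 ∧ SupportPrecedes p.1 p.2}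
      (Prod.mk 0 '' {0}ᶜ) :=
    Set.disjoint_left.mpr fun _ ⟨hu, _⟩ ⟨_, _, hp⟩ => hu (by rw [← hp])
  rw [← card_supportPrecedes, ← Set.coe_ofPred, ← Set.coe_ofPred, Nat.card_coe_set_eq,
    Nat.card_coe_set_eq, hsplit, Set.ncard_union_eq hdisj,
    Set.ncard_image_of_injective _ (Prod.mk_right_injective 0), Set.ncard_compl,
    Set.ncard_singleton, Nat.card_fun]

end SupportPrecedes

theorem sub_one_apply_eq_zero_of_le_iff {ι R : Type*} [LinearOrder ι] [AddGroupWithOne R]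
    {M : Matrix ι ι R} :
    (∀ i j, j ≤ i → (M - 1) i j = 0) ↔ (∀ i, M i i = 1) ∧ ∀ i j, j < i → M i j = 0 := by
  simp +contextual only [le_iff_lt_or_eq, or_imp, forall_and, forall_eq, Matrix.sub_apply,
    sub_eq_zero, one_apply_eq, one_apply_ne (ne_of_gt _)]
  exact and_comm

section StrictUpperRankOne

variable {ι : Type*} [Fintype ι] [LinearOrder ι]

def vecMulVecStrictUpper
    (p : {p : (ι → ZMod 2) × (ι → ZMod 2) // p.1 ≠ 0 ∧ p.2 ≠ 0 ∧ SupportPrecedes p.1 p.2}) :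
    {N : Matrix ι ι (ZMod 2) // (∀ i j, j ≤ i → N i j = 0) ∧ N.rank = 1} :=
  ⟨vecMulVec p.1.1 p.1.2, vecMulVec_apply_eq_zero_of_le_iff.mpr p.2.2.2,
    rank_vecMulVec_of_ne_zero p.2.1 p.2.2.1⟩

theorem vecMulVecStrictUpper_bijective :
    Function.Bijective (vecMulVecStrictUpper (ι := ι)) := by
  constructor
  · rintro ⟨⟨u, v⟩, hu, hv, _⟩ ⟨⟨u', v'⟩, _⟩ h
    obtain ⟨rfl, rfl⟩ := vecMulVec_inj_zmod_two hu hv (congrArg Subtype.val h)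
    rfl
  · rintro ⟨N, hN, hrank⟩
    obtain ⟨u, v, rfl⟩ := exists_eq_vecMulVec_of_rank_eq_one hrank
    have huv : vecMulVec u v ≠ 0 := fun h => by simp [h] at hrank
    rw [Ne, vecMulVec_eq_zero, not_or] at huv
    exact ⟨⟨(u, v), huv.1, huv.2, vecMulVec_apply_eq_zero_of_le_iff.mp hN⟩, rfl⟩

end StrictUpperRankOne

theorem eq_sub_two_mul_two_pow_add_one {n x : ℕ} (hn : 2 ≤ n)
    (h : x + (2 ^ n - 1) = n * 2 ^ (n - 1)) : x = (n - 2) * 2 ^ (n - 1) + 1 := by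
  obtain ⟨m, rfl⟩ := Nat.exists_eq_add_of_le' hn
  have : 1 ≤ 2 ^ m := Nat.one_le_two_pow
  rw [show m + 2 - 1 = m + 1 by omega, Nat.add_sub_cancel] at *
  simp only [pow_succ] at h ⊢
  ring_nf at h ⊢
  omega

/-- For `n ≥ 2`, the number of `n×n` upper unitriangular matrices `M` over `F_2` that are
transvections, i.e. with `rank(M − I) = 1`, equals `(n − 2)·2^{n−1} + 1`. -/
theorem card_unitriangular_transvections
    (n : ℕ) (hn : 2 ≤ n) :
    Nat.card {M : Matrix (Fin n) (Fin n) (ZMod 2) |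
        (∀ i, M i i = 1) ∧ (∀ i j : Fin n, (j : ℕ) < (i : ℕ) → M i j = 0) ∧
        (M - 1).rank = 1}
      = (n - 2) * 2 ^ (n - 1) + 1 := by
  have hcount := card_supportPrecedes_of_ne_zero (ι := Fin n) (R := ZMod 2)
  rw [Nat.card_eq_of_bijective _ vecMulVecStrictUpper_bijective, Nat.card_zmod,
    Nat.card_fin, show 2 - 1 = 1 from rfl, one_mul] at hcount
  calc _ = Nat.card {N : Matrix (Fin n) (Fin n) (ZMod 2) //
          (∀ i j, j ≤ i → N i j = 0) ∧ N.rank = 1} :=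
        Nat.card_congr <| (Equiv.subRight 1).subtypeEquiv fun M => by
          simp only [Set.mem_ofPred_eq, Equiv.subRight_apply, Fin.val_fin_lt,
            sub_one_apply_eq_zero_of_le_iff, and_assoc]
    _ = (n - 2) * 2 ^ (n - 1) + 1 := eq_sub_two_mul_two_pow_add_one hn hcount
end

section
/- For n ≥ 3, let T(n) denote the number of n×n upper unitriangular matrices M over the field F_2 with rank(M − I) = 1. Then T(n) = 2·T(n−1) + 2^{n−1} − 1. -/
/-!
A unitriangular `M` with `rank (M - 1) = 1` is `1 + u vᵀ` with `u, v ≠ 0` and every index in the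
support of `u` strictly before every index in the support of `v`; over `𝔽₂` the pair `(u, v)` is
determined by `M`. Splitting off the first coordinates `u₀, v₀` of such a pair forces `v₀ = 0`, and
either the tails form such a pair again (with `u₀` free), or the tail of `u` vanishes, `u₀ ≠ 0`
and the tail of `v` is any nonzero vector.
-/

open Matrix

theorem Nat.card_subtype_ne {α : Type*} [Finite α] (a : α) :
    Nat.card {x // x ≠ a} = Nat.card α - 1 := by
  have := Fintype.ofFinite α
  classical
  simp [Nat.card_eq_fintype_card, Fintype.card_subtype_compl]

section Separated

variable (R : Type*) [Zero R]

def separatedPairs (m : ℕ) : Set ((Fin m → R) × (Fin m → R)) :=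
  {p | p.1 ≠ 0 ∧ p.2 ≠ 0 ∧ ∀ i j, p.1 i ≠ 0 → p.2 j ≠ 0 → i < j}

variable {R}

theorem separatedPairs_zero : separatedPairs R 0 = ∅ :=
  Set.eq_empty_of_forall_notMem fun _ h => h.1 (Subsingleton.elim _ _)

theorem cons_mem_separatedPairs_succ_iff {k : ℕ} {a b : R} {u v : Fin k → R} :
    (vecCons a u, vecCons b v) ∈ separatedPairs R (k + 1) ↔
      b = 0 ∧ ((u, v) ∈ separatedPairs R k ∨ a ≠ 0 ∧ u = 0 ∧ v ≠ 0) := by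
  simp only [separatedPairs, Set.mem_ofPred_eq, Fin.forall_fin_succ, cons_val_zero, cons_val_succ,
    Ne, cons_eq_zero_iff, lt_irrefl, Fin.succ_lt_succ_iff, (Fin.succ_pos _).not_gt]
  by_cases hb : b = 0 <;> by_cases hu : u = 0 <;> simp_all [funext_iff]

theorem card_separatedPairs_succ [Finite R] (k : ℕ) :
    Nat.card (separatedPairs R (k + 1)) =
      Nat.card R * Nat.card (separatedPairs R k) + (Nat.card R - 1) * (Nat.card R ^ k - 1) := by
  let f : R × separatedPairs R k ⊕ {a : R // a ≠ 0} × {v : Fin k → R // v ≠ 0} →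
      separatedPairs R (k + 1) :=
    Sum.elim
      (fun x => ⟨(vecCons x.1 x.2.1.1, vecCons 0 x.2.1.2),
        cons_mem_separatedPairs_succ_iff.2 ⟨rfl, .inl x.2.2⟩⟩)
      (fun x => ⟨(vecCons x.1 0, vecCons 0 x.2),
        cons_mem_separatedPairs_succ_iff.2 ⟨rfl, .inr ⟨x.1.2, rfl, x.2.2⟩⟩⟩)
  have hf : f.Bijective := by
    refine ⟨Function.Injective.sumElim ?_ ?_ ?_, ?_⟩
    · rintro ⟨a, p, hp⟩ ⟨a', p', hp'⟩ h
      simp_all [vecCons_inj, Prod.ext_iff]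
    · rintro ⟨a, v⟩ ⟨a', v'⟩ h
      simp_all [vecCons_inj, Subtype.ext_iff]
    · rintro ⟨a, p, hp⟩ ⟨a', v'⟩ h
      exact hp.1 (congrArg (vecTail ∘ Prod.fst ∘ Subtype.val) h)
    · rintro ⟨⟨u, v⟩, h⟩
      obtain ⟨a, u, rfl⟩ : ∃ a u', u = vecCons a u' := ⟨_, _, (cons_head_tail u).symm⟩
      obtain ⟨b, v, rfl⟩ : ∃ b v', v = vecCons b v' := ⟨_, _, (cons_head_tail v).symm⟩
      obtain ⟨rfl, hp | ⟨ha, rfl, hv⟩⟩ := cons_mem_separatedPairs_succ_iff.1 h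
      · exact ⟨.inl (a, ⟨_, hp⟩), rfl⟩
      · exact ⟨.inr (⟨a, ha⟩, ⟨v, hv⟩), rfl⟩
  rw [← Nat.card_eq_of_bijective f hf, Nat.card_sum, Nat.card_prod, Nat.card_prod,
    Nat.card_subtype_ne, Nat.card_subtype_ne, Nat.card_fun, Nat.card_fin]

end Separated

namespace Matrix

variable {m n K : Type*} [Fintype m] [Fintype n] [Field K]

theorem rank_eq_zero_iff {A : Matrix m n K} : A.rank = 0 ↔ A = 0 := by
  rw [rank_eq_finrank_span_cols, Submodule.finrank_eq_zero, Submodule.span_eq_bot,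
    Set.forall_mem_range, ← Matrix.ext_iff]
  simp only [funext_iff]
  exact forall_comm

theorem rank_eq_one_iff {A : Matrix m n K} :
    A.rank = 1 ↔ ∃ u v, u ≠ 0 ∧ v ≠ 0 ∧ A = vecMulVec u v := by
  constructor
  · intro hA
    have hA0 : A ≠ 0 := fun h => one_ne_zero (hA.symm.trans (rank_eq_zero_iff.2 h))
    obtain ⟨j, hj⟩ : ∃ j, A.col j ≠ 0 := by
      by_contra! h
      exact hA0 (by ext i j; exact congrFun (h j) i)
    have hspan : Submodule.span K (Set.range A.col) = K ∙ A.col j :=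
      eq_span_singleton_of_mem_of_finrank_eq_one (rank_eq_finrank_span_cols A ▸ hA)
        (Submodule.subset_span ⟨j, rfl⟩) hj
    have hcol (j' : n) : ∃ c : K, c • A.col j = A.col j' :=
      Submodule.mem_span_singleton.1 (hspan ▸ Submodule.subset_span ⟨j', rfl⟩)
    choose c hc using hcol
    have hAc : A = vecMulVec (A.col j) c := by
      ext i j'
      rw [vecMulVec_apply, mul_comm]
      exact (congrFun (hc j') i).symm
    refine ⟨A.col j, c, hj, ?_, hAc⟩
    rintro rfl
    exact hA0 (hAc.trans (by ext; simp [vecMulVec_apply]))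
  · rintro ⟨u, v, hu, hv, rfl⟩
    obtain ⟨i, hi⟩ := Function.ne_iff.1 hu
    obtain ⟨j, hj⟩ := Function.ne_iff.1 hv
    have huv : vecMulVec u v ≠ 0 := fun h => mul_ne_zero hi hj (congrFun (congrFun h i) j)
    exact le_antisymm (rank_vecMulVec_le u v)
      (Nat.one_le_iff_ne_zero.2 (rank_eq_zero_iff.not.2 huv))

end Matrix

section Transvections

variable (K : Type*) [Field K]

def unitriangularTransvections (m : ℕ) : Set (Matrix (Fin m) (Fin m) K) :=
  {M | (∀ i, M i i = 1) ∧ (∀ i j, j < i → M i j = 0) ∧ (M - 1).rank = 1}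

variable {K}

theorem one_add_vecMulVec_unitriangular_iff {m : ℕ} {u v : Fin m → K} :
    ((∀ i, (1 + vecMulVec u v) i i = 1) ∧ ∀ i j, j < i → (1 + vecMulVec u v) i j = 0) ↔
      ∀ i j, u i ≠ 0 → v j ≠ 0 → i < j := by
  simp only [Matrix.add_apply, vecMulVec_apply]
  constructor
  · rintro ⟨hdiag, hlower⟩ i j hi hj
    by_contra! hji
    rcases hji.lt_or_eq with hlt | rfl
    · simpa [one_apply_ne hlt.ne', hi, hj] using hlower i j hlt
    · simpa [hi, hj] using hdiag j
  · intro hsep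
    have hzero (i j : Fin m) (hji : j ≤ i) : u i * v j = 0 := by
      by_contra h
      exact hji.not_gt (hsep i j (left_ne_zero_of_mul h) (right_ne_zero_of_mul h))
    exact ⟨fun i => by simp [hzero i i le_rfl],
      fun i j hji => by simp [one_apply_ne hji.ne', hzero i j hji.le]⟩

theorem unitriangularTransvections_eq_image (m : ℕ) :
    unitriangularTransvections K m =
      (fun p => 1 + vecMulVec p.1 p.2) '' separatedPairs K m := by
  ext M
  constructor
  · rintro ⟨hdiag, hlower, hrank⟩
    obtain ⟨u, v, hu, hv, huv⟩ := rank_eq_one_iff.1 hrank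
    obtain rfl : M = 1 + vecMulVec u v := by rw [← huv, add_sub_cancel]
    exact ⟨(u, v), ⟨hu, hv, one_add_vecMulVec_unitriangular_iff.1 ⟨hdiag, hlower⟩⟩, rfl⟩
  · rintro ⟨⟨u, v⟩, ⟨hu, hv, hsep⟩, rfl⟩
    obtain ⟨hdiag, hlower⟩ := one_add_vecMulVec_unitriangular_iff.2 hsep
    refine ⟨hdiag, hlower, ?_⟩
    rw [add_sub_cancel_left]
    exact rank_eq_one_iff.2 ⟨u, v, hu, hv, rfl⟩

end Transvections

theorem vecMulVec_injOn_zmod_two {ι κ : Type*} :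
    Set.InjOn (fun p : (ι → ZMod 2) × (κ → ZMod 2) => vecMulVec p.1 p.2)
      {p | p.1 ≠ 0 ∧ p.2 ≠ 0} := by
  have eq_one : ∀ a : ZMod 2, a ≠ 0 → a = 1 := by decide
  have mul_eq_one : ∀ a b : ZMod 2, a * b = 1 → a = 1 ∧ b = 1 := by decide
  rintro ⟨u, v⟩ ⟨hu, hv⟩ ⟨u', v'⟩ - h
  obtain ⟨i, hi⟩ := Function.ne_iff.1 hu
  obtain ⟨j, hj⟩ := Function.ne_iff.1 hv
  have hui : u i = 1 := eq_one _ hi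
  have hvj : v j = 1 := eq_one _ hj
  have entry (k l) : u k * v l = u' k * v' l := congrFun (congrFun h k) l
  obtain ⟨hu'i, hv'j⟩ := mul_eq_one _ _ (by rw [← entry, hui, hvj, one_mul])
  ext k
  · simpa [hvj, hv'j] using entry k j
  · simpa [hui, hu'i] using entry i k

theorem card_unitriangularTransvections_zmod_two (m : ℕ) :
    Nat.card (unitriangularTransvections (ZMod 2) m) = Nat.card (separatedPairs (ZMod 2) m) := by
  rw [unitriangularTransvections_eq_image, Nat.card_image_of_injOn]
  refine (add_right_injective 1).comp_injOn (vecMulVec_injOn_zmod_two.mono ?_)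
  exact fun _ hp => ⟨hp.1, hp.2.1⟩

theorem unitriangular_transvection_count_recursion_general
    (n : ℕ) (T : ℕ → ℕ)
    (hT : ∀ m : ℕ, T m = Nat.card {M : Matrix (Fin m) (Fin m) (ZMod 2) |
        (∀ i, M i i = 1) ∧ (∀ i j : Fin m, (j : ℕ) < (i : ℕ) → M i j = 0) ∧
        (M - 1).rank = 1}) :
    T n = 2 * T (n - 1) + 2 ^ (n - 1) - 1 := by
  have hT' (m : ℕ) : T m = Nat.card (separatedPairs (ZMod 2) m) :=
    (hT m).trans (card_unitriangularTransvections_zmod_two m)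
  rcases n with _ | k
  · simp [hT', separatedPairs_zero]
  · rw [hT', hT', Nat.add_sub_cancel, card_separatedPairs_succ, Nat.card_zmod]
    have := Nat.one_le_two_pow (n := k)
    omega

/-- For `n ≥ 3`, let `T(m)` denote the number of `m×m` upper unitriangular matrices `M`
over `F_2` with `rank(M − I) = 1`.  Then `T(n) = 2·T(n−1) + 2^{n−1} − 1`. -/
theorem unitriangular_transvection_count_recursion
    (n : ℕ) (hn : 3 ≤ n) (T : ℕ → ℕ)
    (hT : ∀ m : ℕ, T m = Nat.card {M : Matrix (Fin m) (Fin m) (ZMod 2) |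
        (∀ i, M i i = 1) ∧ (∀ i j : Fin m, (j : ℕ) < (i : ℕ) → M i j = 0) ∧
        (M - 1).rank = 1}) :
    T n = 2 * T (n - 1) + 2 ^ (n - 1) - 1 :=
  unitriangular_transvection_count_recursion_general n T hT
end

section
/- Let G be a finite group acting transitively on a finite set Ω and let Σ be a system of imprimitivity for G on Ω (so all blocks have the same size). Let g ∈ G be an element such that: (i) g does not fix every block of Σ setwise; (ii) g fixes at most one block of Σ pointwise; and (iii) for every block B ∈ Σ that g fixes setwise but not pointwise, 3·|Fix_B(g)| ≤ |B|. Then 3·|Fix_Ω(g)| ≤ |Ω|. -/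
/-
Sort the blocks by what `g` does to them. Fixed points of `g` only lie in blocks that `g`
fixes setwise, so the moved blocks contribute nothing to `Fix_Ω(g)`; by (iii) each block fixed
setwise but not pointwise contributes at most a third of its size. The one block that may be
fixed pointwise contributes a full block `b = |B|`, an excess of `2b` over a third, and this
excess is paid for by two distinct moved blocks `B` and `g • B`, which exist by (i). All blocks
have the same size `b` by transitivity, so `|Ω| = b · |Σ|`.
-/

open MulAction Finset Pointwise

namespace Setoid.IsPartition

variable {α : Type*}

theorem ncard_eq_sum_ncard_inter [Finite α] {ℬ : Finset (Set α)}
    (hℬ : IsPartition (ℬ : Set (Set α))) (s : Set α) :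
    s.ncard = ∑ B ∈ ℬ, (B ∩ s).ncard := by
  have hs : s = ⋃ B ∈ (ℬ : Set (Set α)), B ∩ s := by
    rw [← Set.iUnion₂_inter, ← Set.sUnion_eq_biUnion, hℬ.sUnion_eq_univ, Set.univ_inter]
  rw [← finsum_mem_coe_finset]
  conv_lhs => rw [hs]
  exact ℬ.finite_toSet.ncard_biUnion (fun _ _ => Set.toFinite _)
    (hℬ.pairwiseDisjoint.mono_on fun _ _ => Set.inter_subset_left)

theorem natCard_eq_card_mul_of_ncard_eq [Finite α] {ℬ : Finset (Set α)}
    (hℬ : IsPartition (ℬ : Set (Set α))) {b : ℕ} (hsize : ∀ B ∈ ℬ, B.ncard = b) :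
    Nat.card α = #ℬ * b := by
  rw [← Set.ncard_univ, hℬ.ncard_eq_sum_ncard_inter]
  exact sum_const_nat fun B hB => by rw [Set.inter_univ, hsize B hB]

variable {G : Type*} [Group G] [MulAction G α] {𝒮 : Set (Set α)} {B B' : Set α}

theorem smul_eq_of_smul_mem (h𝒮 : IsPartition 𝒮) (hinv : ∀ x : G, ∀ B ∈ 𝒮, x • B ∈ 𝒮)
    (hB : B ∈ 𝒮) (hB' : B' ∈ 𝒮) {x : G} {a : α} (ha : a ∈ B) (hxa : x • a ∈ B') :
    x • B = B' :=
  eq_of_mem_eqv_class h𝒮.2 (hinv x B hB) (Set.smul_mem_smul_set ha) hB' hxa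

theorem ncard_eq_ncard_of_isPretransitive [IsPretransitive G α] (h𝒮 : IsPartition 𝒮)
    (hinv : ∀ x : G, ∀ B ∈ 𝒮, x • B ∈ 𝒮) (hB : B ∈ 𝒮) (hB' : B' ∈ 𝒮) :
    B.ncard = B'.ncard := by
  obtain ⟨a, ha⟩ := nonempty_of_mem_partition h𝒮 hB
  obtain ⟨a', ha'⟩ := nonempty_of_mem_partition h𝒮 hB'
  obtain ⟨x, rfl⟩ := exists_smul_eq G a a'
  rw [← h𝒮.smul_eq_of_smul_mem hinv hB hB' ha ha', Set.ncard_smul_set]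

theorem inter_fixedBy_eq_empty (h𝒮 : IsPartition 𝒮) (hinv : ∀ x : G, ∀ B ∈ 𝒮, x • B ∈ 𝒮)
    (hB : B ∈ 𝒮) {g : G} (hg : g • B ≠ B) : B ∩ fixedBy α g = ∅ :=
  Set.eq_empty_of_forall_notMem fun _ ⟨ha, hga⟩ =>
    hg (h𝒮.smul_eq_of_smul_mem hinv hB hB ha ((mem_fixedBy.mp hga).symm ▸ ha))

open scoped Classical in
theorem ncard_fixedBy_eq_sum_ncard_inter [Finite α] {ℬ : Finset (Set α)}
    (hℬ : IsPartition (ℬ : Set (Set α))) (hinv : ∀ x : G, ∀ B ∈ ℬ, x • B ∈ ℬ) (g : G) :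
    (fixedBy α g).ncard = ∑ B ∈ ℬ with g • B = B, (B ∩ fixedBy α g).ncard := by
  rw [hℬ.ncard_eq_sum_ncard_inter, sum_filter_of_ne]
  intro B hB hne
  by_contra hg
  exact hne (by rw [hℬ.inter_fixedBy_eq_empty hinv hB hg, Set.ncard_empty])

end Setoid.IsPartition

section Counting

variable {G α : Type*} [Group G] [MulAction G α] {ℬ : Finset (Set α)} {g : G}

open scoped Classical in
theorem two_le_card_filter_smul_ne (hinv : ∀ B ∈ ℬ, g • B ∈ ℬ) {B : Set α} (hB : B ∈ ℬ)
    (hg : g • B ≠ B) : 2 ≤ #{B ∈ ℬ | g • B ≠ B} := by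
  have hgg : g • g • B ≠ g • B := fun h => hg (smul_left_cancel g h)
  calc 2 = #{B, g • B} := (card_pair hg.symm).symm
    _ ≤ #{B ∈ ℬ | g • B ≠ B} := card_le_card <| by
      simp only [insert_subset_iff, singleton_subset_iff, mem_filter]
      exact ⟨⟨hB, hg⟩, hinv B hB, hgg⟩

open scoped Classical in
theorem three_mul_sum_ncard_inter_fixedBy_le {b : ℕ} (hsize : ∀ B ∈ ℬ, B.ncard = b)
    (hthird : ∀ B ∈ ℬ, g • B = B → ¬ B ⊆ fixedBy α g → 3 * (B ∩ fixedBy α g).ncard ≤ B.ncard) :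
    3 * ∑ B ∈ ℬ with g • B = B, (B ∩ fixedBy α g).ncard ≤
      #{B ∈ ℬ | g • B = B} * b + 2 * #{B ∈ ℬ | B ⊆ fixedBy α g} * b := by
  have hblock : ∀ B ∈ {B ∈ ℬ | g • B = B},
      3 * (B ∩ fixedBy α g).ncard ≤ b + if B ⊆ fixedBy α g then 2 * b else 0 := by
    intro B hB
    obtain ⟨hBℬ, hgB⟩ := mem_filter.mp hB
    split_ifs with hfix
    · rw [Set.inter_eq_left.mpr hfix, hsize B hBℬ]
      omega
    · exact (hthird B hBℬ hgB hfix).trans_eq (by rw [hsize B hBℬ, add_zero])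
  calc 3 * ∑ B ∈ ℬ with g • B = B, (B ∩ fixedBy α g).ncard
      ≤ ∑ B ∈ ℬ with g • B = B, (b + if B ⊆ fixedBy α g then 2 * b else 0) := by
        rw [mul_sum]; exact sum_le_sum hblock
    _ = #{B ∈ ℬ | g • B = B} * b + #{B ∈ {B ∈ ℬ | g • B = B} | B ⊆ fixedBy α g} * (2 * b) := by
        rw [sum_add_distrib, sum_const, ← sum_filter, sum_const, smul_eq_mul, smul_eq_mul]
    _ ≤ #{B ∈ ℬ | g • B = B} * b + 2 * #{B ∈ ℬ | B ⊆ fixedBy α g} * b := by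
        rw [mul_left_comm, ← mul_assoc]
        gcongr
        exact filter_subset _ _

end Counting

/-- Let `G` act transitively on a finite set `Ω` and let `𝒮` be a system of imprimitivity
for `G` on `Ω`.  Let `g ∈ G` be such that: (i) `g` does not fix every block of `𝒮` setwise;
(ii) `g` fixes at most one block of `𝒮` pointwise; (iii) for every block `B ∈ 𝒮` fixed by
`g` setwise but not pointwise, `3·|Fix_B(g)| ≤ |B|`.  Then `3·|Fix_Ω(g)| ≤ |Ω|`. -/
theorem fixed_points_le_third_from_blocks
    {G Ω : Type*} [Group G] [Finite Ω] [MulAction G Ω]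
    [MulAction.IsPretransitive G Ω]
    (𝒮 : Set (Set Ω)) (hne : ∅ ∉ 𝒮)
    (hpart : ∀ ω : Ω, ∃! B, B ∈ 𝒮 ∧ ω ∈ B)
    (hinv : ∀ (x : G), ∀ B ∈ 𝒮, x • B ∈ 𝒮)
    (g : G)
    (hi : ¬ ∀ B ∈ 𝒮, g • B = B)
    (hii : Nat.card {B : Set Ω | B ∈ 𝒮 ∧ ∀ ω ∈ B, g • ω = ω} ≤ 1)
    (hiii : ∀ B ∈ 𝒮, g • B = B → (∃ ω ∈ B, g • ω ≠ ω) →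
      3 * Nat.card {ω : Ω | ω ∈ B ∧ g • ω = ω} ≤ Nat.card B) :
    3 * Nat.card {ω : Ω | g • ω = ω} ≤ Nat.card Ω := by
  classical
  obtain ⟨ℬ, rfl⟩ := (Set.toFinite 𝒮).exists_finset_coe
  have hℬ : Setoid.IsPartition (ℬ : Set (Set Ω)) := ⟨hne, hpart⟩
  obtain ⟨B₀, hB₀, hgB₀⟩ : ∃ B ∈ ℬ, g • B ≠ B := by simpa using hi
  set b := B₀.ncard
  have hsize : ∀ B ∈ ℬ, B.ncard = b := fun B hB =>
    hℬ.ncard_eq_ncard_of_isPretransitive hinv hB hB₀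
  have hpointwise : #{B ∈ ℬ | B ⊆ fixedBy Ω g} ≤ 1 := by
    rwa [← Set.ncard_coe_finset, coe_filter, ← Nat.card_coe_set_eq]
  have hmoved := two_le_card_filter_smul_ne (hinv g) hB₀ hgB₀
  have hthird : ∀ B ∈ ℬ, g • B = B → ¬ B ⊆ fixedBy Ω g →
      3 * (B ∩ fixedBy Ω g).ncard ≤ B.ncard := fun B hB hgB hnot =>
    hiii B hB hgB (Set.not_subset.mp hnot)
  change 3 * (fixedBy Ω g).ncard ≤ _
  calc 3 * (fixedBy Ω g).ncard
      = 3 * ∑ B ∈ ℬ with g • B = B, (B ∩ fixedBy Ω g).ncard := by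
        rw [hℬ.ncard_fixedBy_eq_sum_ncard_inter hinv]
    _ ≤ #{B ∈ ℬ | g • B = B} * b + 2 * #{B ∈ ℬ | B ⊆ fixedBy Ω g} * b :=
        three_mul_sum_ncard_inter_fixedBy_le hsize hthird
    _ ≤ #{B ∈ ℬ | g • B = B} * b + #{B ∈ ℬ | g • B ≠ B} * b := by
        gcongr; omega
    _ = Nat.card Ω := by
        rw [← add_mul, card_filter_add_card_filter_not, hℬ.natCard_eq_card_mul_of_ncard_eq hsize]
end
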